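/- arXiv:0903.0147 — 11 statements merged into one kernel-verified Lean document; each statement's English description precedes it below -/
import Mathlib

section
/- Let n ≥ 1 and p = 2n+1 be an odd prime. Define 2n×2n integer matrices P and Q by: P_{i,j} = 1 if i+j = 2n+1 and P_{i,j} = 0 otherwise; Q_{i,1} = -1 for all 1 ≤ i ≤ 2n, Q_{i,j} = 1 if i ≥ 2 and i+j = 2n+2, and Q_{i,j} = 0 otherwise. Let C_n be the companion matrix of θ_n, and define 2n×2n integer block matrices X' = [[-E_n, E_n],[0, E_n]] and Y' = [[-E_n, 0],[C_n, E_n]] (E_n the n×n identity). Then there exists a matrix U ∈ GL(2n,ℤ) (i.e. an integer matrix with determinant ±1) such that U·P·U⁻¹ = X' and U·Q·U⁻¹ = Y'. -/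
open Finset Matrix

/-- The coefficient `c_k^{(n)} = C(n+k,2k) + 2·C(n+k,2k+1)` of `θ_n`. -/
def thetaCoeff (n k : ℕ) : ℤ := ((n + k).choose (2 * k) : ℤ) + 2 * ((n + k).choose (2 * k + 1) : ℤ)

/-- The companion matrix `C_n` of `θ_n`: 1's on the subdiagonal, last column
`(-c_0^{(n)}, …, -c_{n-1}^{(n)})ᵀ`, and 0's elsewhere. -/
def companionTheta (n : ℕ) : Matrix (Fin n) (Fin n) ℤ :=
  Matrix.of fun i j =>
    if (j : ℕ) = n - 1 then - thetaCoeff n i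
    else if (i : ℕ) = (j : ℕ) + 1 then 1 else 0

/-- The 2n×2n matrix `P` (1-based: `P_{i,j} = 1` iff `i + j = 2n+1`). -/
def Pmat (n : ℕ) : Matrix (Fin (2 * n)) (Fin (2 * n)) ℤ :=
  Matrix.of fun i j => if (i : ℕ) + (j : ℕ) = 2 * n - 1 then 1 else 0

/-- The 2n×2n matrix `Q` (1-based: `Q_{i,1} = -1` for all `i`, `Q_{i,j} = 1` if
`i ≥ 2` and `i + j = 2n+2`, and `0` otherwise). -/
def Qmat (n : ℕ) : Matrix (Fin (2 * n)) (Fin (2 * n)) ℤ :=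
  Matrix.of fun i j =>
    if (j : ℕ) = 0 then -1
    else if 1 ≤ (i : ℕ) ∧ (i : ℕ) + (j : ℕ) = 2 * n then 1 else 0

/-- Identification of `Fin n ⊕ Fin n` with `Fin (2*n)`, used to assemble block matrices. -/
def sumEquiv (n : ℕ) : (Fin n ⊕ Fin n) ≃ Fin (2 * n) :=
  finSumFinEquiv.trans (finCongr (two_mul n).symm)

/-!
Work in `R = ℤ[X]/(θ_n)`, with coordinates in the power basis `1, X, …, X^(n-1)`; there
multiplication by `X` has matrix `C_n`. The `θ_j` satisfy the Chebyshev recurrence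
`θ_(j+2) = (X + 2) θ_(j+1) - θ_j`, so their residues `ϑ_j` in `R` satisfy `ϑ_n = 0`, hence
`ϑ_(2n-j) = -ϑ_j`. Let the columns of `U` be the coordinates of `(ϑ_j, ϑ_j - ϑ_(j+1)) ∈ R²` for
`0 ≤ j < 2n`. Right multiplication by `P` moves column `2n-1-j` to `j`, and by `Q` column `2n-j` to
`j` (for `j ≠ 0`), so `U P = X' U` and `U Q = Y' U` reduce to the reflection symmetry and the
recurrence. `U` is unimodular: summing its columns over the bands `{j : m < j < 2n-m, j ≢ m mod 2}`
turns it into `[[A, 0], [*, A]]`, where `A`, the coordinate matrix of `ϑ_0, …, ϑ_(n-1)`, is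
unitriangular.
-/

open Polynomial

section Chebyshev

variable {A : Type*} [CommRing A] {s : ℕ → A} {w : A} {n : ℕ}

lemma recurrence_reflect_add (hs : ∀ j, s (j + 2) = w * s (j + 1) - s j) (hn : s n = 0) :
    ∀ k ≤ n, s (n + k) = -s (n - k)
  | 0, _ => by simp [hn]
  | 1, hk => by
    have := hs (n - 1)
    rw [show n - 1 + 2 = n + 1 by omega, show n - 1 + 1 = n by omega, hn] at this
    simpa using this
  | k + 2, hk => by
    have h₁ := recurrence_reflect_add hs hn k (by omega)
    have h₂ := recurrence_reflect_add hs hn (k + 1) (by omega)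
    have h₃ := hs (n - (k + 2))
    rw [show n - (k + 2) + 2 = n - k by omega, show n - (k + 2) + 1 = n - (k + 1) by omega] at h₃
    rw [← add_assoc, hs, add_assoc, h₂, h₁, h₃]
    ring

lemma recurrence_reflect_two_mul_sub (hs : ∀ j, s (j + 2) = w * s (j + 1) - s j) (hn : s n = 0)
    {j : ℕ} (hj : j ≤ 2 * n) : s (2 * n - j) = -s j := by
  rcases le_total j n with h | h
  · have := recurrence_reflect_add hs hn (n - j) (by omega)
    rwa [show n + (n - j) = 2 * n - j by omega, show n - (n - j) = j by omega] at this
  · have := recurrence_reflect_add hs hn (j - n) (by omega)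
    rw [show n + (j - n) = j by omega, show n - (j - n) = 2 * n - j by omega] at this
    rw [this, neg_neg]

end Chebyshev

lemma sum_eq_zero_of_reflect {M : Type*} [AddCommGroup M] {s : ℕ → M} {n : ℕ}
    (hs : ∀ j ≤ 2 * n, s (2 * n - j) = -s j) (hn : s n = 0) {S : Finset ℕ}
    (hS : ∀ j ∈ S, j ≤ 2 * n ∧ 2 * n - j ∈ S) : ∑ j ∈ S, s j = 0 :=
  sum_involution (fun j _ => 2 * n - j)
    (fun j hj => by rw [hs j (hS j hj).1, add_neg_cancel])
    (fun j _ hj hfix => hj (by rwa [show j = n by omega]))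
    (fun j hj => (hS j hj).2)
    (fun j hj => by have := (hS j hj).1; omega)

lemma X_mul_modByMonic {R : Type*} [CommRing R] {f g : R[X]} (hg : g.Monic)
    (hf : f.degree < g.degree) :
    (X * f) %ₘ g = X * f - C (f.coeff (g.natDegree - 1)) * g := by
  nontriviality R
  rcases eq_or_ne f 0 with rfl | hf₀
  · simp
  rw [degree_eq_natDegree hg.ne_zero] at hf
  obtain ⟨N, hN⟩ : ∃ N, g.natDegree = N + 1 :=
    Nat.exists_eq_add_one.2 (by exact_mod_cast (zero_le_degree_iff.2 hf₀).trans_lt hf)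
  refine (div_modByMonic_unique (C (f.coeff (g.natDegree - 1))) _ hg ⟨by ring, ?_⟩).2
  rw [degree_eq_natDegree hg.ne_zero, degree_lt_iff_coeff_zero]
  intro m hm
  obtain ⟨k, rfl⟩ : ∃ k, m = k + 1 := Nat.exists_eq_add_one.2 (by omega)
  rw [hN] at hf hm
  rcases eq_or_lt_of_le (Nat.le_of_succ_le_succ hm) with rfl | hk
  · rw [coeff_sub, coeff_C_mul, coeff_X_mul, ← hN, hg.coeff_natDegree, hN]
    simp
  · simp [coeff_X_mul, coeff_eq_zero_of_degree_lt (hf.trans_le (by exact_mod_cast hk)),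
      coeff_eq_zero_of_natDegree_lt (show g.natDegree < k + 1 by omega)]

lemma submatrix_mul_eq_reindex_mul {m ι R : Type*} [Fintype m] [Fintype ι]
    [NonUnitalNonAssocSemiring R]
    {U : Matrix m ι R} {M : Matrix ι ι R} {B : Matrix m m R} (e : m ≃ ι) (h : U * M = B * U) :
    U.submatrix e.symm id * M = reindex e e B * U.submatrix e.symm id := by
  rw [reindex_apply, submatrix_mul_equiv, ← h]
  rfl

lemma thetaCoeff_zero_left (k : ℕ) : thetaCoeff 0 k = if k = 0 then 1 else 0 := by
  rcases k with _ | k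
  · simp [thetaCoeff]
  · simp [thetaCoeff, Nat.choose_eq_zero_of_lt]

lemma thetaCoeff_zero_right (j : ℕ) : thetaCoeff j 0 = 2 * j + 1 := by
  simp only [thetaCoeff, add_zero, mul_zero, zero_add, Nat.choose_zero_right,
    Nat.choose_one_right, Nat.cast_one]
  ring

lemma thetaCoeff_self (j : ℕ) : thetaCoeff j j = 1 := by
  simp [thetaCoeff, ← two_mul]

lemma thetaCoeff_eq_zero_of_lt {j k : ℕ} (h : j < k) : thetaCoeff j k = 0 := by
  simp [thetaCoeff, Nat.choose_eq_zero_of_lt, show j + k < 2 * k by omega,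
    show j + k < 2 * k + 1 by omega]

lemma thetaCoeff_add_two (j i : ℕ) :
    thetaCoeff (j + 2) (i + 1) = thetaCoeff (j + 1) i + 2 * thetaCoeff (j + 1) (i + 1)
      - thetaCoeff j (i + 1) := by
  have pascal (a b : ℕ) : ((a + 1).choose (b + 1) : ℤ) = a.choose b + a.choose (b + 1) := by
    exact_mod_cast Nat.choose_succ_succ a b
  simp only [thetaCoeff, show j + 2 + (i + 1) = j + i + 2 + 1 by omega,
    show j + (i + 1) = j + i + 1 by omega, show j + 1 + i = j + i + 1 by omega,
    show j + 1 + (i + 1) = j + i + 1 + 1 by omega, show 2 * (i + 1) = 2 * i + 1 + 1 by omega,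
    pascal (j + i + 2), pascal (j + i + 1)]
  ring

noncomputable def theta : ℕ → ℤ[X]
  | 0 => 1
  | 1 => X + 3
  | j + 2 => (X + 2) * theta (j + 1) - theta j

lemma theta_add_two (j : ℕ) : theta (j + 2) = (X + 2) * theta (j + 1) - theta j := rfl

lemma coeff_theta : ∀ j k : ℕ, (theta j).coeff k = thetaCoeff j k
  | 0, k => by simp [theta, coeff_one, thetaCoeff_zero_left]
  | 1, 0 => by simp [theta, thetaCoeff_zero_right]
  | 1, 1 => by simp [theta, thetaCoeff_self]
  | 1, k + 2 => by simp [theta, coeff_X, thetaCoeff_eq_zero_of_lt]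
  | j + 2, 0 => by
    simp only [theta_add_two, coeff_sub, mul_coeff_zero, coeff_add, coeff_X_zero,
      coeff_ofNat_zero, zero_add, coeff_theta (j + 1), coeff_theta j, thetaCoeff_zero_right]
    push_cast
    ring
  | j + 2, i + 1 => by
    simp [theta_add_two, add_mul, coeff_X_mul, coeff_theta (j + 1), coeff_theta j,
      thetaCoeff_add_two]

lemma degree_theta (j : ℕ) : (theta j).degree = j :=
  degree_eq_of_le_of_coeff_ne_zero
    ((degree_le_iff_coeff_zero _ _).2 fun k hk => by
      rw [coeff_theta, thetaCoeff_eq_zero_of_lt (by exact_mod_cast hk)])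
    (by simp [coeff_theta, thetaCoeff_self])

lemma natDegree_theta (j : ℕ) : (theta j).natDegree = j :=
  natDegree_eq_of_degree_eq_some (degree_theta j)

lemma monic_theta (j : ℕ) : (theta j).Monic := by
  rw [Monic, leadingCoeff, natDegree_theta, coeff_theta, thetaCoeff_self]

section Coordinates

variable (n : ℕ)

noncomputable def powerCoords : AdjoinRoot (theta n) →ₗ[ℤ] Fin n → ℤ :=
  LinearMap.pi fun i => (lcoeff ℤ i).comp (AdjoinRoot.modByMonicHom (monic_theta n))

lemma powerCoords_apply (r : AdjoinRoot (theta n)) (i : Fin n) :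
    powerCoords n r i = (AdjoinRoot.modByMonicHom (monic_theta n) r).coeff i :=
  rfl

variable {n}

lemma powerCoords_mk {f : ℤ[X]} (hf : f.degree < n) (i : Fin n) :
    powerCoords n (AdjoinRoot.mk _ f) i = f.coeff i := by
  rw [powerCoords_apply, AdjoinRoot.modByMonicHom_mk,
    (modByMonic_eq_self_iff (monic_theta n)).2 (by rwa [degree_theta])]

lemma companionTheta_apply (i k : Fin n) :
    companionTheta n i k
      = (if (k : ℕ) = n - 1 then -thetaCoeff n i else 0)
        + if (i : ℕ) = k + 1 then 1 else 0 := by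
  have := i.isLt
  rw [companionTheta, of_apply]
  split_ifs <;> omega

lemma companionTheta_mulVec_powerCoords (r : AdjoinRoot (theta n)) :
    companionTheta n *ᵥ powerCoords n r = powerCoords n (AdjoinRoot.root _ * r) := by
  obtain ⟨p, rfl⟩ := AdjoinRoot.mk_surjective r
  set f := p %ₘ theta n
  have hf : f.degree < (theta n).degree := degree_modByMonic_lt _ (monic_theta n)
  have hr : AdjoinRoot.root (theta n) * AdjoinRoot.mk _ p = AdjoinRoot.mk _ (X * f) := by
    rw [map_mul, AdjoinRoot.mk_X]
    exact congrArg _ (AdjoinRoot.mk_leftInverse (monic_theta n) _).symm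
  ext ⟨i, hi⟩
  rw [hr, powerCoords_apply, AdjoinRoot.modByMonicHom_mk, X_mul_modByMonic (monic_theta n) hf,
    natDegree_theta, mulVec, dotProduct]
  simp only [companionTheta_apply, powerCoords_apply, AdjoinRoot.modByMonicHom_mk, add_mul,
    ite_mul, zero_mul, one_mul, sum_add_distrib]
  rw [Fin.sum_univ_eq_sum_range (fun k => if k = n - 1 then -thetaCoeff n i * f.coeff k else 0),
    Fin.sum_univ_eq_sum_range (fun k => if i = k + 1 then f.coeff k else 0),
    sum_ite_eq' _ _ (fun k => -thetaCoeff n i * f.coeff k),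
    if_pos (mem_range.2 (by omega))]
  rcases i with _ | i
  · simp [coeff_theta, mul_comm]
  · simp only [Nat.add_right_cancel_iff, sum_ite_eq, mem_range, show i < n by omega, if_true,
      coeff_sub, coeff_X_mul, coeff_C_mul, coeff_theta]
    ring

end Coordinates

section Residues

variable (n : ℕ)

noncomputable def thetaMod (j : ℕ) : AdjoinRoot (theta n) := AdjoinRoot.mk _ (theta j)

noncomputable def thetaModDiff (j : ℕ) : AdjoinRoot (theta n) := thetaMod n j - thetaMod n (j + 1)

variable {n}

lemma thetaMod_zero : thetaMod n 0 = 1 := map_one _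

lemma thetaMod_one : thetaMod n 1 = AdjoinRoot.root _ + 3 := by
  simp [thetaMod, theta, map_ofNat]

lemma thetaMod_add_two (j : ℕ) :
    thetaMod n (j + 2) = (AdjoinRoot.root _ + 2) * thetaMod n (j + 1) - thetaMod n j := by
  simp [thetaMod, theta_add_two, map_ofNat]

lemma thetaMod_self : thetaMod n n = 0 := AdjoinRoot.mk_self

lemma thetaMod_two_mul_sub {j : ℕ} (hj : j ≤ 2 * n) : thetaMod n (2 * n - j) = -thetaMod n j :=
  recurrence_reflect_two_mul_sub thetaMod_add_two thetaMod_self hj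

lemma sum_range_thetaMod (hn : 0 < n) : ∑ k ∈ range (2 * n), thetaMod n k = 1 := by
  have hsplit : range (2 * n) = insert 0 (Ioo 0 (2 * n)) := by
    ext k
    simp only [mem_range, mem_insert, mem_Ioo]
    omega
  rw [hsplit, sum_insert (by simp), thetaMod_zero,
    sum_eq_zero_of_reflect (fun j hj => thetaMod_two_mul_sub hj) thetaMod_self
      (fun j hj => by simp only [mem_Ioo] at hj ⊢; omega), add_zero]

def parityBand (n m : ℕ) : Finset ℕ := {j ∈ Ioo m (2 * n - m) | (j + m) % 2 = 1}

lemma mem_parityBand {m j : ℕ} :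
    j ∈ parityBand n m ↔ (m < j ∧ j < 2 * n - m) ∧ (j + m) % 2 = 1 := by
  rw [parityBand, mem_filter, mem_Ioo]

lemma sum_parityBand_thetaMod (m : ℕ) : ∑ j ∈ parityBand n m, thetaMod n j = 0 :=
  sum_eq_zero_of_reflect (fun j hj => thetaMod_two_mul_sub hj) thetaMod_self
    (fun j hj => by simp only [mem_parityBand] at hj ⊢; omega)

lemma sum_parityBand_thetaModDiff {m : ℕ} (hm : m < n) :
    ∑ j ∈ parityBand n m, thetaModDiff n j = thetaMod n m := by
  have hshift : ∑ j ∈ parityBand n m, thetaMod n (j + 1)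
      = ∑ j ∈ insert (2 * n - m) (parityBand n (m + 1)), thetaMod n j :=
    sum_nbij' (· + 1) (· - 1)
      (fun j hj => by simp only [mem_insert, mem_parityBand] at hj ⊢; omega)
      (fun j hj => by simp only [mem_insert, mem_parityBand] at hj ⊢; omega) (fun j _ => rfl)
      (fun j hj => by simp only [mem_insert, mem_parityBand] at hj; omega) (fun j _ => rfl)
  simp only [thetaModDiff]
  rw [sum_sub_distrib, hshift, sum_insert (by simp only [mem_parityBand]; omega),
    sum_parityBand_thetaMod, sum_parityBand_thetaMod, thetaMod_two_mul_sub (by omega)]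
  ring

end Residues

section ColumnSums

variable {M : Type*} [AddCommGroup M] {n : ℕ}

lemma sum_fin_indicator_smul {N : ℕ} {S : Finset ℕ} (hS : ∀ j ∈ S, j < N) (u : ℕ → M) :
    ∑ k : Fin N, (if (k : ℕ) ∈ S then (1 : ℤ) else 0) • u k = ∑ j ∈ S, u j := by
  simp only [ite_smul, one_smul, zero_smul]
  rw [Fin.sum_univ_eq_sum_range (fun k => if k ∈ S then u k else 0), ← sum_filter,
    filter_mem_eq_inter, inter_eq_right.2 fun j hj => mem_range.2 (hS j hj)]

lemma sum_Pmat_smul (u : ℕ → M) (j : Fin (2 * n)) :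
    ∑ k, Pmat n k j • u k = u (2 * n - 1 - j) := by
  rw [← sum_singleton u (2 * n - 1 - j),
    ← sum_fin_indicator_smul (N := 2 * n) (S := {2 * n - 1 - j})
      (by simp only [mem_singleton, forall_eq]; omega)]
  refine sum_congr rfl fun k _ => ?_
  simp only [Pmat, of_apply, mem_singleton]
  split_ifs <;> first | rfl | omega

lemma sum_Qmat_smul (u : ℕ → M) (j : Fin (2 * n)) :
    ∑ k, Qmat n k j • u k
      = if (j : ℕ) = 0 then -∑ k ∈ range (2 * n), u k else u (2 * n - j) := by
  split_ifs with hj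
  · simp [Qmat, hj, Fin.sum_univ_eq_sum_range]
  · rw [← sum_singleton u (2 * n - j),
      ← sum_fin_indicator_smul (N := 2 * n) (S := {2 * n - j})
        (by simp only [mem_singleton, forall_eq]; omega)]
    refine sum_congr rfl fun k _ => ?_
    simp only [Qmat, of_apply, mem_singleton, if_neg hj]
    split_ifs <;> first | rfl | omega

end ColumnSums

section ColumnMatrices

variable (n : ℕ) {ι κ : Type*}

noncomputable def coordMatrix (u : ι → AdjoinRoot (theta n)) : Matrix (Fin n) ι ℤ :=
  of fun i j => powerCoords n (u j) i

variable {n}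

lemma coordMatrix_add (u v : ι → AdjoinRoot (theta n)) :
    coordMatrix n (u + v) = coordMatrix n u + coordMatrix n v := by
  ext; simp [coordMatrix]

lemma coordMatrix_neg (u : ι → AdjoinRoot (theta n)) :
    coordMatrix n (-u) = -coordMatrix n u := by
  ext; simp [coordMatrix]

lemma coordMatrix_zero : coordMatrix n (0 : ι → AdjoinRoot (theta n)) = 0 := by
  ext; simp [coordMatrix]

lemma coordMatrix_mul [Fintype ι] (u : ι → AdjoinRoot (theta n)) (N : Matrix ι κ ℤ) :
    coordMatrix n u * N = coordMatrix n fun c => ∑ k, N k c • u k := by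
  ext i c
  simp only [coordMatrix, mul_apply, of_apply, map_sum, map_zsmul, Finset.sum_apply, Pi.smul_apply,
    smul_eq_mul, mul_comm]

lemma companionTheta_mul_coordMatrix (u : ι → AdjoinRoot (theta n)) :
    companionTheta n * coordMatrix n u = coordMatrix n fun j => AdjoinRoot.root _ * u j := by
  ext i j
  simp only [coordMatrix, ← companionTheta_mulVec_powerCoords, mul_apply, mulVec, dotProduct,
    of_apply]

end ColumnMatrices

section Intertwiner

variable (n : ℕ)

noncomputable def intertwinerRows : Matrix (Fin n ⊕ Fin n) (Fin (2 * n)) ℤ :=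
  fromRows (coordMatrix n fun j : Fin (2 * n) => thetaMod n j)
    (coordMatrix n fun j : Fin (2 * n) => thetaModDiff n j)

noncomputable def intertwiner : Matrix (Fin (2 * n)) (Fin (2 * n)) ℤ :=
  (intertwinerRows n).submatrix (sumEquiv n).symm id

def reductionMatrix : Matrix (Fin (2 * n)) (Fin n ⊕ Fin n) ℤ :=
  fromCols ((1 : Matrix (Fin (2 * n)) (Fin (2 * n)) ℤ).submatrix id (Fin.castLE (by omega)))
    (of fun k m => if (k : ℕ) ∈ parityBand n m then 1 else 0)

variable {n}

lemma intertwinerRows_mul_Pmat :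
    intertwinerRows n * Pmat n
      = (fromBlocks (-1) 1 0 1 : Matrix (Fin n ⊕ Fin n) (Fin n ⊕ Fin n) ℤ)
        * intertwinerRows n := by
  rw [intertwinerRows, fromRows_mul, fromBlocks_mul_fromRows, coordMatrix_mul, coordMatrix_mul]
  simp only [sum_Pmat_smul, Matrix.neg_mul, Matrix.one_mul, Matrix.zero_mul, zero_add,
    ← coordMatrix_neg, ← coordMatrix_add]
  congr 2 <;> funext ⟨j, hj⟩ <;> simp only [Pi.add_apply, Pi.neg_apply, thetaModDiff]
  · rw [show 2 * n - 1 - j = 2 * n - (j + 1) by omega, thetaMod_two_mul_sub (by omega)]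
    ring
  · rw [show 2 * n - 1 - j + 1 = 2 * n - j by omega, show 2 * n - 1 - j = 2 * n - (j + 1) by omega,
      thetaMod_two_mul_sub (by omega), thetaMod_two_mul_sub (by omega)]
    ring

lemma intertwinerRows_mul_Qmat :
    intertwinerRows n * Qmat n
      = (fromBlocks (-1) 0 (companionTheta n) 1 : Matrix (Fin n ⊕ Fin n) (Fin n ⊕ Fin n) ℤ)
        * intertwinerRows n := by
  rw [intertwinerRows, fromRows_mul, fromBlocks_mul_fromRows, coordMatrix_mul, coordMatrix_mul]
  simp only [sum_Qmat_smul, Matrix.neg_mul, Matrix.one_mul, Matrix.zero_mul, add_zero,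
    companionTheta_mul_coordMatrix, ← coordMatrix_neg, ← coordMatrix_add]
  congr 2 <;> funext ⟨j, hj⟩ <;> simp only [Pi.add_apply, Pi.neg_apply]
  · rcases j with _ | j
    · simp [sum_range_thetaMod (show 0 < n by omega), thetaMod_zero]
    · simp [thetaMod_two_mul_sub (show j + 1 ≤ 2 * n by omega)]
  · rcases j with _ | j
    · have h2n := thetaMod_two_mul_sub (n := n) (j := 0) (by omega)
      simp only [thetaModDiff, Nat.sub_zero] at h2n ⊢
      rw [if_pos trivial, sum_range_sub' (thetaMod n), h2n, thetaMod_zero, thetaMod_one]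
      ring
    · simp only [thetaModDiff]
      rw [if_neg j.succ_ne_zero, show 2 * n - (j + 1) + 1 = 2 * n - j by omega,
        thetaMod_two_mul_sub (by omega), thetaMod_two_mul_sub (by omega), thetaMod_add_two]
      ring

lemma intertwinerRows_mul_reductionMatrix :
    intertwinerRows n * reductionMatrix n
      = fromBlocks (coordMatrix n fun m : Fin n => thetaMod n m) 0
          (coordMatrix n fun m : Fin n => thetaModDiff n m)
          (coordMatrix n fun m : Fin n => thetaMod n m) := by
  rw [intertwinerRows, reductionMatrix, fromRows_mul_fromCols, coordMatrix_mul, coordMatrix_mul,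
    coordMatrix_mul, coordMatrix_mul, ← coordMatrix_zero]
  have hband (m : ℕ) : ∀ j ∈ parityBand n m, j < 2 * n := fun j hj => by
    simp only [mem_parityBand] at hj; omega
  congr 2 <;> funext ⟨m, hm⟩
  · simp [one_apply]
  · simp only [of_apply, Pi.zero_apply]
    rw [sum_fin_indicator_smul (hband m), sum_parityBand_thetaMod]
  · simp [one_apply]
  · simp only [of_apply]
    rw [sum_fin_indicator_smul (hband m), sum_parityBand_thetaModDiff hm]

lemma det_coordMatrix_thetaMod : (coordMatrix n fun m : Fin n => thetaMod n m).det = 1 := by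
  have hentry (i m : Fin n) :
      coordMatrix n (fun m : Fin n => thetaMod n m) i m = thetaCoeff m i := by
    rw [coordMatrix, of_apply, thetaMod,
      powerCoords_mk (by rw [degree_theta]; exact_mod_cast m.isLt), coeff_theta]
  rw [det_of_isUpperTriangular fun i m (h : m < i) => by
    rw [hentry, thetaCoeff_eq_zero_of_lt h]]
  simp [hentry, thetaCoeff_self]

lemma isUnit_det_intertwiner : IsUnit (intertwiner n).det := by
  refine IsUnit.of_mul_eq_one ((reductionMatrix n).submatrix id (sumEquiv n).symm).det ?_
  rw [← det_mul, intertwiner, ← submatrix_mul _ _ _ _ _ Function.bijective_id,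
    det_submatrix_equiv_self, intertwinerRows_mul_reductionMatrix, det_fromBlocks_zero₁₂,
    det_coordMatrix_thetaMod, one_mul]

end Intertwiner

theorem stmt_0_general (n : ℕ) :
    ∃ U : Matrix (Fin (2 * n)) (Fin (2 * n)) ℤ, IsUnit U.det ∧
      U * Pmat n * U⁻¹ =
        (Matrix.reindex (sumEquiv n) (sumEquiv n))
          (Matrix.fromBlocks (-1) 1 0 (1 : Matrix (Fin n) (Fin n) ℤ)) ∧
      U * Qmat n * U⁻¹ =
        (Matrix.reindex (sumEquiv n) (sumEquiv n))
          (Matrix.fromBlocks (-1) 0 (companionTheta n) (1 : Matrix (Fin n) (Fin n) ℤ)) := by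
  refine ⟨intertwiner n, isUnit_det_intertwiner, ?_, ?_⟩
  · rw [show intertwiner n * Pmat n = _ * intertwiner n from
      submatrix_mul_eq_reindex_mul _ intertwinerRows_mul_Pmat,
      mul_nonsing_inv_cancel_right _ _ isUnit_det_intertwiner]
  · rw [show intertwiner n * Qmat n = _ * intertwiner n from
      submatrix_mul_eq_reindex_mul _ intertwinerRows_mul_Qmat,
      mul_nonsing_inv_cancel_right _ _ isUnit_det_intertwiner]

theorem stmt_0 (n : ℕ) (hn : 1 ≤ n) (hp : Nat.Prime (2 * n + 1)) :
    ∃ U : Matrix (Fin (2 * n)) (Fin (2 * n)) ℤ, IsUnit U.det ∧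
      U * Pmat n * U⁻¹ =
        (Matrix.reindex (sumEquiv n) (sumEquiv n))
          (Matrix.fromBlocks (-1) 1 0 (1 : Matrix (Fin n) (Fin n) ℤ)) ∧
      U * Qmat n * U⁻¹ =
        (Matrix.reindex (sumEquiv n) (sumEquiv n))
          (Matrix.fromBlocks (-1) 0 (companionTheta n) (1 : Matrix (Fin n) (Fin n) ℤ)) :=
  stmt_0_general n
end

section
/- Let n ≥ 1, p = 2n+1 an odd prime, and let ω ∈ ℂ be a root of θ_n. With X = [[-1,1],[0,1]], Y = [[-1,0],[ω,1]] over ℂ and (XY)^k = [[a_k, b_k],[c_k, d_k]], one has (XY)^p = I, and: (1) a_k = a_{2n−k} for all 0 ≤ k ≤ 2n, and a_{2n+1} = a_0; (2) b_k = −b_{p−k} for all 0 ≤ k ≤ 2n, and b_p = 0. -/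
/-!
`XY = [[1+ω, 1], [ω, 1]]` has trace `t = ω + 2` and determinant `1`, so by Cayley–Hamilton
`(XY)^k = S_{k-1}(t) • XY - S_{k-2}(t) • 1`, where `S` are the (ℤ-indexed) Chebyshev
`S`-polynomials, `S_{m+2} = X S_{m+1} - S_m`. Expanding `S_{k-1}(ω + 2)` binomially gives
`θ_n(ω) = S_n(t) + S_{n-1}(t)`. Now `j ↦ S_j(t)` and `j ↦ -S_{2n-1-j}(t)` satisfy the same
two-term recurrence on ℤ, and `θ_n(ω) = 0` says they agree at `j = n - 1, n`; hence they are
equal, and `(XY)^{2n+1} = 1` as well as both symmetries are read off from this reflection.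
-/

open Finset

/-- The matrix `X = [[-1,1],[0,1]]` over `ℂ`. -/
noncomputable def Xmat : Matrix (Fin 2) (Fin 2) ℂ := !![-1, 1; 0, 1]

/-- The matrix `Y = [[-1,0],[ω,1]]` over `ℂ`. -/
noncomputable def Ymat (ω : ℂ) : Matrix (Fin 2) (Fin 2) ℂ := !![-1, 0; ω, 1]

/-- `a_k`: the (1,1)-entry of `(XY)^k`. -/
noncomputable def aEnt (ω : ℂ) (k : ℕ) : ℂ := ((Xmat * Ymat ω) ^ k) 0 0

/-- `b_k`: the (1,2)-entry of `(XY)^k`. -/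
noncomputable def bEnt (ω : ℂ) (k : ℕ) : ℂ := ((Xmat * Ymat ω) ^ k) 0 1

open Polynomial Polynomial.Chebyshev

section Chebyshev

variable {R : Type*} [CommRing R]

lemma eq_zero_of_recurrence {t : R} {s : ℤ → R} (hs : ∀ j, s (j + 2) = t * s (j + 1) - s j)
    (h₀ : s 0 = 0) (h₁ : s 1 = 0) (j : ℤ) : s j = 0 := by
  induction j using Polynomial.Chebyshev.induct with
  | zero => exact h₀
  | one => exact h₁
  | add_two n hn₁ hn₀ => rw [hs, hn₁, hn₀, mul_zero, sub_zero]
  | neg_add_one n hn₀ hn₁ =>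
    have h := hs (-n - 1)
    rw [show -(n : ℤ) - 1 + 2 = -n + 1 by ring, show -(n : ℤ) - 1 + 1 = -n by ring, hn₀,
      hn₁] at h
    linear_combination h

lemma S_eval_add_two (t : R) (m : ℤ) :
    (S R (m + 2)).eval t = t * (S R (m + 1)).eval t - (S R m).eval t := by
  simp [S_add_two]

lemma S_eval_two_mul_sub_one_sub (t : R) {n : ℤ}
    (h : (S R n).eval t + (S R (n - 1)).eval t = 0) (j : ℤ) :
    (S R (2 * n - 1 - j)).eval t = -(S R j).eval t := by
  have key := eq_zero_of_recurrence (t := t)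
    (s := fun j => (S R (n - 1 + j)).eval t + (S R (n - j)).eval t) (fun j => ?_)
    (by simpa [add_comm] using h) (by simpa using h) (j - n + 1)
  · rw [show n - 1 + (j - n + 1) = j by ring, show n - (j - n + 1) = 2 * n - 1 - j by ring] at key
    linear_combination key
  · have h₁ := S_eval_add_two t (n - 1 + j)
    have h₂ := S_eval_add_two t (n - j - 2)
    rw [show n - 1 + j + 2 = n - 1 + (j + 2) by ring,
      show n - 1 + j + 1 = n - 1 + (j + 1) by ring] at h₁
    rw [show n - j - 2 + 2 = n - j by ring, show n - j - 2 + 1 = n - (j + 1) by ring,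
      show n - j - 2 = n - (j + 2) by ring] at h₂
    linear_combination h₁ + h₂

lemma pow_eq_S_eval_smul {A : Type*} [Ring A] [Algebra R A] {t : R} {x : A}
    (hx : x ^ 2 = t • x - 1) (k : ℕ) :
    x ^ k = (S R (k - 1)).eval t • x - (S R (k - 2)).eval t • 1 := by
  induction k with
  | zero => simp
  | succ k ih =>
    have h : (S R ((k + 1 : ℕ) - 1)).eval t =
        t * (S R (k - 1)).eval t - (S R (k - 2)).eval t := by
      rw [show ((k + 1 : ℕ) : ℤ) - 1 = k - 2 + 2 by push_cast; ring, S_eval_add_two,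
        show (k : ℤ) - 2 + 1 = k - 1 by ring]
    rw [pow_succ, ih, sub_mul, smul_mul_assoc, smul_mul_assoc, one_mul, ← sq, hx, h,
      show ((k + 1 : ℕ) : ℤ) - 2 = k - 1 by push_cast; ring]
    module

lemma sum_range_choose_of_le (ω : R) {k N : ℕ} (h : k ≤ N) :
    ∑ j ∈ range N, ((k + j).choose (2 * j + 1) : R) * ω ^ j =
      ∑ j ∈ range k, ((k + j).choose (2 * j + 1) : R) * ω ^ j := by
  refine (sum_subset (range_subset_range.2 h) fun j _ hj => ?_).symm
  rw [Nat.choose_eq_zero_of_lt (by simp at hj; omega), Nat.cast_zero, zero_mul]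

lemma choose_add_two_add_choose (a b : ℕ) :
    (a + 2).choose (b + 2) + a.choose (b + 2) = 2 * (a + 1).choose (b + 2) + a.choose b := by
  simp only [Nat.choose_succ_succ']
  ring

lemma sum_range_choose_add_two (ω : R) (k : ℕ) :
    ∑ j ∈ range (k + 2), ((k + 2 + j).choose (2 * j + 1) : R) * ω ^ j =
      (ω + 2) * ∑ j ∈ range (k + 1), ((k + 1 + j).choose (2 * j + 1) : R) * ω ^ j -
        ∑ j ∈ range k, ((k + j).choose (2 * j + 1) : R) * ω ^ j := by
  have hsum : ∑ j ∈ range (k + 2), (((k + 2 + j).choose (2 * j + 1) : R) +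
      (k + j).choose (2 * j + 1) - 2 * (k + 1 + j).choose (2 * j + 1)) * ω ^ j =
      ω * ∑ j ∈ range (k + 1), ((k + 1 + j).choose (2 * j + 1) : R) * ω ^ j := by
    rw [sum_range_succ', mul_sum]
    refine (add_eq_left.2 (by push_cast [Nat.choose_one_right]; ring)).trans
      (sum_congr rfl fun j _ => ?_)
    have h := choose_add_two_add_choose (k + 1 + j) (2 * j + 1)
    rw [show k + 1 + j + 2 = k + 2 + (j + 1) by ring, show 2 * j + 1 + 2 = 2 * (j + 1) + 1 by ring,
      show k + 1 + j + 1 = k + 1 + (j + 1) by ring] at h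
    rw [show k + (j + 1) = k + 1 + j by ring]
    have h' := congrArg (Nat.cast : ℕ → R) h
    push_cast at h'
    linear_combination ω ^ (j + 1) * h'
  simp only [add_mul, sub_mul, sum_add_distrib, sum_sub_distrib, mul_assoc, ← mul_sum] at hsum
  rw [sum_range_choose_of_le ω (show k ≤ k + 2 by omega),
    sum_range_choose_of_le ω (show k + 1 ≤ k + 2 by omega)] at hsum
  linear_combination hsum

lemma S_eval_eq_sum_range_choose (ω : R) (k : ℕ) :
    (S R (k - 1)).eval (ω + 2) = ∑ j ∈ range k, ((k + j).choose (2 * j + 1) : R) * ω ^ j := by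
  induction k using Nat.twoStepInduction with
  | zero => simp
  | one => simp
  | more k ih₀ ih₁ =>
    rw [show ((k + 2 : ℕ) : ℤ) - 1 = k - 1 + 2 by push_cast; ring, S_eval_add_two,
      show (k : ℤ) - 1 + 1 = (k + 1 : ℕ) - 1 by push_cast; ring, ih₀, ih₁,
      sum_range_choose_add_two]

lemma sum_thetaCoeff_mul_pow_eq (ω : R) (n : ℕ) :
    ∑ k ∈ range (n + 1), (thetaCoeff n k : R) * ω ^ k =
      (S R n).eval (ω + 2) + (S R (n - 1)).eval (ω + 2) := by
  have h := S_eval_eq_sum_range_choose ω (n + 1)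
  push_cast at h
  rw [add_sub_cancel_right] at h
  rw [h, S_eval_eq_sum_range_choose, ← sum_range_choose_of_le ω (Nat.le_succ n),
    ← sum_add_distrib]
  refine sum_congr rfl fun j _ => ?_
  rw [thetaCoeff, show n + 1 + j = n + j + 1 by ring, Nat.choose_succ_succ']
  push_cast
  ring

end Chebyshev

lemma Xmat_mul_Ymat_sq (ω : ℂ) : (Xmat * Ymat ω) ^ 2 = (ω + 2) • (Xmat * Ymat ω) - 1 := by
  rw [sq, Xmat, Ymat]
  ext i j
  fin_cases i <;> fin_cases j <;> simp [Matrix.mul_apply, Fin.sum_univ_two] <;> ring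

lemma aEnt_eq (ω : ℂ) (k : ℕ) :
    aEnt ω k = (S ℂ k).eval (ω + 2) - (S ℂ (k - 1)).eval (ω + 2) := by
  have h := S_eval_add_two (ω + 2) (k - 2)
  rw [show (k : ℤ) - 2 + 2 = k by ring, show (k : ℤ) - 2 + 1 = k - 1 by ring] at h
  rw [aEnt, pow_eq_S_eval_smul (Xmat_mul_Ymat_sq ω), h]
  simp [Xmat, Ymat]
  ring

lemma bEnt_eq (ω : ℂ) (k : ℕ) : bEnt ω k = (S ℂ (k - 1)).eval (ω + 2) := by
  rw [bEnt, pow_eq_S_eval_smul (Xmat_mul_Ymat_sq ω)]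
  simp [Xmat, Ymat]

theorem stmt_2_general (n : ℕ) (ω : ℂ)
    (hω : ∑ k ∈ Finset.range (n + 1), (thetaCoeff n k : ℂ) * ω ^ k = 0) :
    (Xmat * Ymat ω) ^ (2 * n + 1) = 1 ∧
    (∀ k ≤ 2 * n, aEnt ω k = aEnt ω (2 * n - k)) ∧
    aEnt ω (2 * n + 1) = aEnt ω 0 ∧
    (∀ k ≤ 2 * n, bEnt ω k = - bEnt ω (2 * n + 1 - k)) ∧
    bEnt ω (2 * n + 1) = 0 := by
  have hS := S_eval_two_mul_sub_one_sub (ω + 2) (n := n) (by rwa [← sum_thetaCoeff_mul_pow_eq])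
  have hpow : (Xmat * Ymat ω) ^ (2 * n + 1) = 1 := by
    -- `S_{2n} = -S_{-1} = 0` and `S_{2n-1} = -S_0 = -1`
    push_cast [pow_eq_S_eval_smul (Xmat_mul_Ymat_sq ω)]
    rw [show 2 * (n : ℤ) + 1 - 1 = 2 * n - 1 - -1 by ring,
      show 2 * (n : ℤ) + 1 - 2 = 2 * n - 1 - 0 by ring, hS, hS]
    simp
  refine ⟨hpow, fun k hk => ?_, by simp [aEnt, hpow], fun k hk => ?_, by simp [bEnt, hpow]⟩
  · push_cast [aEnt_eq, Nat.cast_sub hk]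
    rw [show 2 * (n : ℤ) - k = 2 * n - 1 - (k - 1) by ring,
      show 2 * (n : ℤ) - 1 - (k - 1) - 1 = 2 * n - 1 - k by ring, hS, hS]
    ring
  · push_cast [bEnt_eq, Nat.cast_sub (show k ≤ 2 * n + 1 by omega)]
    rw [show 2 * (n : ℤ) + 1 - k - 1 = 2 * n - 1 - (k - 1) by ring, hS, neg_neg]

theorem stmt_2 (n : ℕ) (hn : 1 ≤ n) (hp : Nat.Prime (2 * n + 1)) (ω : ℂ)
    (hω : ∑ k ∈ Finset.range (n + 1), (thetaCoeff n k : ℂ) * ω ^ k = 0) :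
    (Xmat * Ymat ω) ^ (2 * n + 1) = 1 ∧
    (∀ k ≤ 2 * n, aEnt ω k = aEnt ω (2 * n - k)) ∧
    aEnt ω (2 * n + 1) = aEnt ω 0 ∧
    (∀ k ≤ 2 * n, bEnt ω k = - bEnt ω (2 * n + 1 - k)) ∧
    bEnt ω (2 * n + 1) = 0 :=
  stmt_2_general n ω hω
end

section
/- Let n ≥ 1, p = 2n+1 an odd prime, and let ω ∈ ℂ be a root of θ_n. With X = [[-1,1],[0,1]], Y = [[-1,0],[ω,1]] over ℂ and (XY)^k = [[a_k, b_k],[c_k, d_k]], the following hold: (1) a_0 + a_1 + ⋯ + a_{2n} = 0; (2) b_1 + b_2 + ⋯ + b_{2n} = 0; (3) d_0 + d_1 + ⋯ + d_{2n} = 0; (4) a_n + 2·b_n = 0; (5) if k ≡ ℓ (mod p) then a_k = a_ℓ, b_k = b_ℓ, c_k = c_ℓ and d_k = d_ℓ. -/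
open Finset

/-- `c_k`: the (2,1)-entry of `(XY)^k`. -/
noncomputable def cEnt (ω : ℂ) (k : ℕ) : ℂ := ((Xmat * Ymat ω) ^ k) 1 0

/-- `d_k`: the (2,2)-entry of `(XY)^k`. -/
noncomputable def dEnt (ω : ℂ) (k : ℕ) : ℂ := ((Xmat * Ymat ω) ^ k) 1 1

/-
Since `(XY)^k` commutes with `XY = [[1+ω,1],[ω,1]]`, it has the form `[[a, b],[ω b, a - ω b]]`, and
Pascal's rule shows that its first row is `(Σ C(k+j,2j) ω^j, Σ C(k+j,2j+1) ω^j)` (Morgan–Voyce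
polynomials). Hence `θ_n(ω) = a_n + 2 b_n`, which is (4). By (4), `(XY)^n = b_n K` with
`K = [[-2,1],[ω,-2-ω]]`, and `K (XY) K = det K`, so `det (XY)^n = 1` forces
`(XY)^(2n+1) = (XY)^n (XY) (XY)^n = 1`, which gives (5). Finally `θ_n(0) = 2n+1 ≠ 0`, so
`XY - 1`, of determinant `-ω`, is invertible and the geometric sum `Σ_{k ≤ 2n} (XY)^k` vanishes,
which gives (1)–(3).
-/

open Polynomial

section BinomPoly

variable (R : Type*) [Semiring R]

noncomputable def evenBinomPoly (k : ℕ) : R[X] :=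
  ∑ j ∈ range (k + 1), monomial j (((k + j).choose (2 * j) : ℕ) : R)

noncomputable def oddBinomPoly (k : ℕ) : R[X] :=
  ∑ j ∈ range (k + 1), monomial j (((k + j).choose (2 * j + 1) : ℕ) : R)

variable {R}

lemma coeff_sum_range_monomial {k : ℕ} {c : ℕ → R} (hc : ∀ j, k < j → c j = 0) (i : ℕ) :
    (∑ j ∈ range (k + 1), monomial j (c j)).coeff i = c i := by
  simp only [finsetSum_coeff, coeff_monomial, sum_ite_eq', mem_range]
  split_ifs with h
  · rfl
  · exact (hc i (by omega)).symm

lemma coeff_evenBinomPoly (k i : ℕ) : (evenBinomPoly R k).coeff i = ((k + i).choose (2 * i) : R) :=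
  coeff_sum_range_monomial (fun j hj => by rw [Nat.choose_eq_zero_of_lt (by omega), Nat.cast_zero]) i

lemma coeff_oddBinomPoly (k i : ℕ) :
    (oddBinomPoly R k).coeff i = ((k + i).choose (2 * i + 1) : R) :=
  coeff_sum_range_monomial (fun j hj => by rw [Nat.choose_eq_zero_of_lt (by omega), Nat.cast_zero]) i

lemma oddBinomPoly_succ (k : ℕ) :
    oddBinomPoly R (k + 1) = evenBinomPoly R k + oddBinomPoly R k := by
  ext i
  rw [coeff_add, coeff_oddBinomPoly, coeff_evenBinomPoly, coeff_oddBinomPoly, add_right_comm,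
    Nat.choose_succ_succ', Nat.cast_add]

lemma evenBinomPoly_succ (k : ℕ) :
    evenBinomPoly R (k + 1) = evenBinomPoly R k + X * oddBinomPoly R (k + 1) := by
  ext (_ | i)
  · simp [coeff_evenBinomPoly]
  · rw [coeff_add, coeff_X_mul, coeff_evenBinomPoly, coeff_evenBinomPoly, coeff_oddBinomPoly,
      show k + 1 + (i + 1) = k + 1 + i + 1 by ring, show 2 * (i + 1) = 2 * i + 1 + 1 by ring,
      Nat.choose_succ_succ', show k + (i + 1) = k + 1 + i by ring, Nat.cast_add, add_comm]

end BinomPoly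

section MatrixPower

variable {R : Type*} [CommRing R]

lemma pow_eq_binomPoly (ω : R) (k : ℕ) :
    !![1 + ω, 1; ω, 1] ^ k =
      !![(evenBinomPoly R k).eval ω, (oddBinomPoly R k).eval ω;
        ω * (oddBinomPoly R k).eval ω, (evenBinomPoly R k).eval ω - ω * (oddBinomPoly R k).eval ω] := by
  induction k with
  | zero => simp [evenBinomPoly, oddBinomPoly, Matrix.one_fin_two]
  | succ k ih =>
    rw [pow_succ, ih, Matrix.mul_fin_two, evenBinomPoly_succ, oddBinomPoly_succ]
    simp only [eval_add, eval_mul, eval_X]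
    ext i j
    fin_cases i <;> fin_cases j <;> simp <;> ring

lemma eval_evenBinomPoly_add_two_mul_oddBinomPoly (ω : R) (n : ℕ) :
    (evenBinomPoly R n).eval ω + 2 * (oddBinomPoly R n).eval ω =
      ∑ k ∈ range (n + 1), (thetaCoeff n k : R) * ω ^ k := by
  simp only [evenBinomPoly, oddBinomPoly, eval_finsetSum, eval_monomial, mul_sum,
    ← sum_add_distrib, thetaCoeff]
  refine sum_congr rfl fun k _ => ?_
  push_cast
  ring

lemma det_pow_binomPoly (ω : R) (n : ℕ) :
    (evenBinomPoly R n).eval ω * ((evenBinomPoly R n).eval ω - ω * (oddBinomPoly R n).eval ω) -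
      (oddBinomPoly R n).eval ω * (ω * (oddBinomPoly R n).eval ω) = 1 := by
  have h := congrArg Matrix.det (pow_eq_binomPoly ω n)
  rw [Matrix.det_pow, Matrix.det_fin_two_of, Matrix.det_fin_two_of, mul_one, one_mul,
    add_sub_cancel_right, one_pow] at h
  exact h.symm

lemma mul_mul_self_eq_one_of_add_two_mul_eq_zero {ω a b : R} (hab : a + 2 * b = 0)
    (hdet : a * (a - ω * b) - b * (ω * b) = 1) :
    !![a, b; ω * b, a - ω * b] * !![1 + ω, 1; ω, 1] * !![a, b; ω * b, a - ω * b] = 1 := by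
  obtain rfl : a = -2 * b := by linear_combination hab
  ext i j
  fin_cases i <;> fin_cases j <;> simp <;>
    first | linear_combination hdet | ring1

lemma pow_two_mul_add_one_eq_one {ω : R} {n : ℕ}
    (h : (evenBinomPoly R n).eval ω + 2 * (oddBinomPoly R n).eval ω = 0) :
    !![1 + ω, 1; ω, 1] ^ (2 * n + 1) = 1 := by
  rw [show 2 * n + 1 = n + 1 + n by ring, pow_add, pow_succ, pow_eq_binomPoly]
  exact mul_mul_self_eq_one_of_add_two_mul_eq_zero h (det_pow_binomPoly ω n)

end MatrixPower

lemma geom_sum_eq_zero_of_pow_eq_one {A : Type*} [Ring A] {x : A} {m : ℕ} (hx : x ^ m = 1)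
    (hx1 : IsUnit (x - 1)) : ∑ i ∈ range m, x ^ i = 0 :=
  hx1.mul_left_eq_zero.mp (by rw [geom_sum_mul, hx, sub_self])

lemma Xmat_mul_Ymat (ω : ℂ) : Xmat * Ymat ω = !![1 + ω, 1; ω, 1] := by
  rw [Xmat, Ymat, Matrix.mul_fin_two]
  norm_num

lemma isUnit_Xmat_mul_Ymat_sub_one {ω : ℂ} (hω : ω ≠ 0) : IsUnit (Xmat * Ymat ω - 1) := by
  rw [Matrix.isUnit_iff_isUnit_det, isUnit_iff_ne_zero, Matrix.det_fin_two, Xmat_mul_Ymat]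
  simpa using hω

lemma thetaCoeff_zero (n : ℕ) : thetaCoeff n 0 = 2 * n + 1 := by
  simp [thetaCoeff, add_comm]

lemma ne_zero_of_sum_thetaCoeff_eq_zero {n : ℕ} {ω : ℂ}
    (hω : ∑ k ∈ range (n + 1), (thetaCoeff n k : ℂ) * ω ^ k = 0) : ω ≠ 0 := by
  rintro rfl
  rw [sum_range_succ', sum_eq_zero fun k _ => by rw [zero_pow k.succ_ne_zero, mul_zero],
    zero_add, pow_zero, mul_one, thetaCoeff_zero] at hω
  norm_cast at hω

theorem stmt_3_general (n : ℕ) (ω : ℂ)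
    (hω : ∑ k ∈ Finset.range (n + 1), (thetaCoeff n k : ℂ) * ω ^ k = 0) :
    (∑ k ∈ Finset.range (2 * n + 1), aEnt ω k = 0) ∧
    (∑ k ∈ Finset.Icc 1 (2 * n), bEnt ω k = 0) ∧
    (∑ k ∈ Finset.range (2 * n + 1), dEnt ω k = 0) ∧
    (aEnt ω n + 2 * bEnt ω n = 0) ∧
    (∀ k l : ℕ, k % (2 * n + 1) = l % (2 * n + 1) →
      aEnt ω k = aEnt ω l ∧ bEnt ω k = bEnt ω l ∧ cEnt ω k = cEnt ω l ∧ dEnt ω k = dEnt ω l) := by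
  have hθ : (evenBinomPoly ℂ n).eval ω + 2 * (oddBinomPoly ℂ n).eval ω = 0 := by
    rwa [eval_evenBinomPoly_add_two_mul_oddBinomPoly]
  have hper : (Xmat * Ymat ω) ^ (2 * n + 1) = 1 := by
    rw [Xmat_mul_Ymat]; exact pow_two_mul_add_one_eq_one hθ
  have hsum := geom_sum_eq_zero_of_pow_eq_one hper
    (isUnit_Xmat_mul_Ymat_sub_one (ne_zero_of_sum_thetaCoeff_eq_zero hω))
  have hentry (i j : Fin 2) : ∑ k ∈ range (2 * n + 1), ((Xmat * Ymat ω) ^ k) i j = 0 := by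
    rw [← Matrix.sum_apply, hsum, Matrix.zero_apply]
  refine ⟨hentry 0 0, ?_, hentry 1 1, ?_, fun k l hkl => ?_⟩
  · have h := hentry 0 1
    rw [Nat.range_succ_eq_Icc_zero, ← add_sum_Ioc_eq_sum_Icc (Nat.zero_le _), pow_zero,
      Matrix.one_apply_ne zero_ne_one, zero_add, ← Icc_add_one_left_eq_Ioc, zero_add] at h
    exact h
  · simpa [aEnt, bEnt, Xmat_mul_Ymat, pow_eq_binomPoly] using hθ
  · simp only [aEnt, bEnt, cEnt, dEnt, pow_eq_pow_mod k hper, pow_eq_pow_mod l hper, hkl, and_self]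

theorem stmt_3 (n : ℕ) (hn : 1 ≤ n) (hp : Nat.Prime (2 * n + 1)) (ω : ℂ)
    (hω : ∑ k ∈ Finset.range (n + 1), (thetaCoeff n k : ℂ) * ω ^ k = 0) :
    (∑ k ∈ Finset.range (2 * n + 1), aEnt ω k = 0) ∧
    (∑ k ∈ Finset.Icc 1 (2 * n), bEnt ω k = 0) ∧
    (∑ k ∈ Finset.range (2 * n + 1), dEnt ω k = 0) ∧
    (aEnt ω n + 2 * bEnt ω n = 0) ∧
    (∀ k l : ℕ, k % (2 * n + 1) = l % (2 * n + 1) →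
      aEnt ω k = aEnt ω l ∧ bEnt ω k = bEnt ω l ∧ cEnt ω k = cEnt ω l ∧ dEnt ω k = dEnt ω l) :=
  stmt_3_general n ω hω
end

section
/- Let n ≥ 1, p = 2n+1 an odd prime, and let ω ∈ ℂ be a root of θ_n. With X = [[-1,1],[0,1]], Y = [[-1,0],[ω,1]] over ℂ and (XY)^k = [[a_k, b_k],[c_k, d_k]], the following matrix identities hold (I the 2×2 identity matrix): (1) for 1 ≤ k ≤ n, (XY)^k + (YX)^k = (a_{k−1} + a_k)·I; (2) for 1 ≤ k ≤ n−1, (XY)^k·X + Y·(XY)^k = a_k·(X+Y); (3) (XY)^n·X = Y·(XY)^n = −b_n·(X+Y). -/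
open Finset

lemma theta_vanish {n k : ℕ} (h : n < k) : thetaCoeff n k = 0 := by
  unfold thetaCoeff
  rw [Nat.choose_eq_zero_of_lt (by omega), Nat.choose_eq_zero_of_lt (by omega)]
  simp

lemma key_nat (n j : ℕ) :
    (n+3+j).choose (2*j+2) + 2*(n+3+j).choose (2*j+3)
      + ((n+1+j).choose (2*j+2) + 2*(n+1+j).choose (2*j+3))
    = 2*((n+2+j).choose (2*j+2) + 2*(n+2+j).choose (2*j+3))
      + ((n+1+j).choose (2*j) + 2*(n+1+j).choose (2*j+1)) := by
  have e3 : n+3+j = (n+1+j)+1+1 := by ring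
  have e2 : n+2+j = (n+1+j)+1 := by ring
  rw [e3, e2]
  have p : ∀ m r : ℕ, (m+1).choose (r+1) = m.choose r + m.choose (r+1) := fun m r =>
    Nat.choose_succ_succ m r
  rw [show 2*j+2 = (2*j+1)+1 from rfl, show 2*j+3 = (2*j+2)+1 from rfl]
  rw [p, p, p, p]
  rw [show 2*j+1 = (2*j)+1 from rfl]
  rw [p, p]
  ring

lemma key (n j : ℕ) :
    thetaCoeff (n+2) (j+1) + thetaCoeff n (j+1)
      = 2 * thetaCoeff (n+1) (j+1) + thetaCoeff (n+1) j := by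
  unfold thetaCoeff
  have h1 : n+2+(j+1) = n+3+j := by omega
  have h2 : n+(j+1) = n+1+j := by omega
  have h3 : n+1+(j+1) = n+2+j := by omega
  have h4 : 2*(j+1) = 2*j+2 := by omega
  have h5 : 2*(j+1)+1 = 2*j+3 := by omega
  rw [h1, h2, h3, h5, h4]
  have := key_nat n j
  have := key_nat (n) j
  zify at this
  linarith [this]

lemma key0 (n : ℕ) : thetaCoeff (n+2) 0 + thetaCoeff n 0 = 2 * thetaCoeff (n+1) 0 := by
  unfold thetaCoeff
  simp [Nat.choose_one_right]
  push_cast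
  ring


noncomputable def T (ω : ℂ) (m : ℕ) : ℂ := ∑ k ∈ Finset.range (m+1), (thetaCoeff m k : ℂ) * ω^k

lemma T_def (ω : ℂ) (m : ℕ) : T ω m = ∑ k ∈ Finset.range (m+1), (thetaCoeff m k : ℂ) * ω^k := rfl

lemma T_rec (ω : ℂ) (n : ℕ) : T ω (n+2) = (2+ω) * T ω (n+1) - T ω n := by
  have ext1 : T ω (n+1) = ∑ k ∈ Finset.range (n+3), (thetaCoeff (n+1) k : ℂ) * ω^k := by
    rw [T_def, Finset.sum_range_succ (n := n+2), theta_vanish (by omega)]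
    simp
  have ext0 : T ω n = ∑ k ∈ Finset.range (n+3), (thetaCoeff n k : ℂ) * ω^k := by
    rw [T_def, Finset.sum_range_succ (n := n+2), Finset.sum_range_succ (n := n+1),
      theta_vanish (show n < n+2 by omega), theta_vanish (show n < n+1 by omega)]
    simp
  have e2 : (∑ k ∈ Finset.range (n+3), (thetaCoeff (n+2) k:ℂ) * ω^k)
      = (∑ j ∈ Finset.range (n+2), (thetaCoeff (n+2) (j+1):ℂ) * ω^(j+1)) + (thetaCoeff (n+2) 0:ℂ) := by
    simpa using Finset.sum_range_succ' (fun k => (thetaCoeff (n+2) k:ℂ) * ω^k) (n+2)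
  have e1 : (∑ k ∈ Finset.range (n+3), (thetaCoeff (n+1) k:ℂ) * ω^k)
      = (∑ j ∈ Finset.range (n+2), (thetaCoeff (n+1) (j+1):ℂ) * ω^(j+1)) + (thetaCoeff (n+1) 0:ℂ) := by
    simpa using Finset.sum_range_succ' (fun k => (thetaCoeff (n+1) k:ℂ) * ω^k) (n+2)
  have e0 : (∑ k ∈ Finset.range (n+3), (thetaCoeff n k:ℂ) * ω^k)
      = (∑ j ∈ Finset.range (n+2), (thetaCoeff n (j+1):ℂ) * ω^(j+1)) + (thetaCoeff n 0:ℂ) := by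
    simpa using Finset.sum_range_succ' (fun k => (thetaCoeff n k:ℂ) * ω^k) (n+2)
  have eshift : ω * (∑ k ∈ Finset.range (n+3), (thetaCoeff (n+1) k:ℂ)*ω^k)
      = ∑ j ∈ Finset.range (n+2), (thetaCoeff (n+1) j : ℂ) * ω^(j+1) := by
    rw [Finset.sum_range_succ (n := n+2), theta_vanish (show (n+1) < n+2 by omega)]
    push_cast
    rw [zero_mul, add_zero, Finset.mul_sum]
    exact Finset.sum_congr rfl fun j _ => by ring
  have hkey : (∑ j ∈ Finset.range (n+2), (thetaCoeff (n+2) (j+1):ℂ)*ω^(j+1))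
      + (∑ j ∈ Finset.range (n+2), (thetaCoeff n (j+1):ℂ)*ω^(j+1))
      = 2 * (∑ j ∈ Finset.range (n+2), (thetaCoeff (n+1) (j+1):ℂ)*ω^(j+1))
      + (∑ j ∈ Finset.range (n+2), (thetaCoeff (n+1) j:ℂ)*ω^(j+1)) := by
    rw [← Finset.sum_add_distrib, Finset.mul_sum, ← Finset.sum_add_distrib]
    refine Finset.sum_congr rfl fun j _ => ?_
    have h := key n j
    have h' : ((thetaCoeff (n+2) (j+1) : ℤ) : ℂ) + ((thetaCoeff n (j+1) : ℤ) : ℂ)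
        = 2 * ((thetaCoeff (n+1) (j+1) : ℤ) : ℂ) + ((thetaCoeff (n+1) j : ℤ) : ℂ) := by
      exact_mod_cast congrArg (fun z : ℤ => (z : ℂ)) h
    linear_combination (ω^(j+1)) * h'
  have h0' : ((thetaCoeff (n+2) 0 : ℤ) : ℂ) + ((thetaCoeff n 0 : ℤ) : ℂ)
      = 2 * ((thetaCoeff (n+1) 0 : ℤ) : ℂ) := by
    exact_mod_cast congrArg (fun z : ℤ => (z : ℂ)) (key0 n)
  rw [T_def (ω) (n+2), ext1, ext0, e2, e0]
  linear_combination hkey + h0' - eshift - 2 * e1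

noncomputable def AB (ω : ℂ) : ℕ → ℂ × ℂ
  | 0 => (1, 0)
  | k+1 => ((1+ω) * (AB ω k).1 + ω * (AB ω k).2, (AB ω k).1 + (AB ω k).2)

lemma XY_eq (ω : ℂ) : Xmat * Ymat ω = !![1+ω, 1; ω, 1] := by
  rw [Xmat, Ymat, Matrix.mul_fin_two]; ring_nf

lemma YX_eq (ω : ℂ) : Ymat ω * Xmat = !![1, -1; -ω, 1+ω] := by
  rw [Xmat, Ymat, Matrix.mul_fin_two]; norm_num [add_comm]

lemma powM (ω : ℂ) : ∀ k, (Xmat * Ymat ω)^(k+1)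
    = !![(AB ω (k+1)).1, (AB ω (k+1)).2; ω*(AB ω (k+1)).2, (AB ω k).1]
  | 0 => by rw [pow_one, XY_eq]; simp [AB]
  | k+1 => by
    rw [pow_succ, powM ω k, XY_eq, Matrix.mul_fin_two]
    simp only [AB]; congr 1; ring

lemma powN (ω : ℂ) : ∀ k, (Ymat ω * Xmat)^(k+1)
    = !![(AB ω k).1, -(AB ω (k+1)).2; -(ω*(AB ω (k+1)).2), (AB ω (k+1)).1]
  | 0 => by rw [pow_one, YX_eq]; simp [AB]
  | k+1 => by
    rw [pow_succ, powN ω k, YX_eq, Matrix.mul_fin_two]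
    simp only [AB]; congr 1; ring

lemma aEnt_eq_s4 (ω : ℂ) (k : ℕ) : aEnt ω k = (AB ω k).1 := by
  cases k with
  | zero => simp [aEnt, AB, Matrix.one_apply]
  | succ k => rw [aEnt, powM]; simp

lemma bEnt_eq_s4 (ω : ℂ) (k : ℕ) : bEnt ω k = (AB ω k).2 := by
  cases k with
  | zero => simp [bEnt, AB, Matrix.one_apply]
  | succ k => rw [bEnt, powM]; simp

lemma part1 (ω : ℂ) (k : ℕ) (hk : 1 ≤ k) :
    (Xmat * Ymat ω) ^ k + (Ymat ω * Xmat) ^ k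
      = (aEnt ω (k - 1) + aEnt ω k) • (1 : Matrix (Fin 2) (Fin 2) ℂ) := by
  obtain ⟨j, rfl⟩ : ∃ j, k = j + 1 := ⟨k - 1, by omega⟩
  rw [powM, powN, aEnt_eq_s4, aEnt_eq_s4]
  ext i l
  simp only [Nat.add_sub_cancel]
  fin_cases i <;> fin_cases l <;>
    simp [Matrix.add_apply, Matrix.smul_apply, Matrix.one_apply] <;> ring

lemma part2 (ω : ℂ) (k : ℕ) (hk : 1 ≤ k) :
    (Xmat * Ymat ω) ^ k * Xmat + Ymat ω * (Xmat * Ymat ω) ^ k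
      = aEnt ω k • (Xmat + Ymat ω) := by
  obtain ⟨j, rfl⟩ : ∃ j, k = j + 1 := ⟨k - 1, by omega⟩
  rw [powM, aEnt_eq_s4, Xmat, Ymat, Matrix.mul_fin_two, Matrix.mul_fin_two]
  ext i l
  fin_cases i <;> fin_cases l <;>
    simp [Matrix.add_apply, Matrix.smul_apply, AB] <;> ring

lemma part3core (ω : ℂ) (n : ℕ) (hn : 1 ≤ n) (h0 : (AB ω n).1 + 2 * (AB ω n).2 = 0) :
    (Xmat * Ymat ω) ^ n * Xmat = Ymat ω * (Xmat * Ymat ω) ^ n ∧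
    (Xmat * Ymat ω) ^ n * Xmat = (- bEnt ω n) • (Xmat + Ymat ω) := by
  obtain ⟨j, rfl⟩ : ∃ j, n = j + 1 := ⟨n - 1, by omega⟩
  rw [bEnt_eq_s4, powM, Xmat, Ymat, Matrix.mul_fin_two, Matrix.mul_fin_two]
  simp only [AB] at h0 ⊢
  constructor <;>
  · ext i l
    fin_cases i <;> fin_cases l <;>
      simp [Matrix.add_apply, Matrix.smul_apply] <;>
      first | linear_combination h0 | linear_combination -h0 | linear_combination ω*h0 |
        linear_combination -(ω*h0) | linear_combination 2*h0 | ring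

lemma T_zero (ω : ℂ) : T ω 0 = 1 := by
  rw [T_def]
  simp [thetaCoeff]

lemma T_one (ω : ℂ) : T ω 1 = 3 + ω := by
  rw [T_def, Finset.sum_range_succ, Finset.sum_range_one]
  norm_num [thetaCoeff]
  try ring

lemma S_eq_T (ω : ℂ) : ∀ n, (AB ω n).1 + 2 * (AB ω n).2 = T ω n := by
  have H : ∀ n, ((AB ω n).1 + 2 * (AB ω n).2 = T ω n)
      ∧ ((AB ω (n+1)).1 + 2 * (AB ω (n+1)).2 = T ω (n+1)) := by
    intro n
    induction n with
    | zero =>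
      refine ⟨by simp [AB, T_zero], ?_⟩
      rw [T_one]; simp [AB]; ring
    | succ k ih =>
      obtain ⟨ih1, ih2⟩ := ih
      refine ⟨ih2, ?_⟩
      rw [T_rec]
      simp only [AB] at ih2 ⊢
      linear_combination (2+ω) * ih2 - ih1
  exact fun n => (H n).1

theorem stmt_4 (n : ℕ) (hn : 1 ≤ n) (hp : Nat.Prime (2 * n + 1)) (ω : ℂ)
    (hω : ∑ k ∈ Finset.range (n + 1), (thetaCoeff n k : ℂ) * ω ^ k = 0) :
    (∀ k : ℕ, 1 ≤ k → k ≤ n →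
      (Xmat * Ymat ω) ^ k + (Ymat ω * Xmat) ^ k
        = (aEnt ω (k - 1) + aEnt ω k) • (1 : Matrix (Fin 2) (Fin 2) ℂ)) ∧
    (∀ k : ℕ, 1 ≤ k → k ≤ n - 1 →
      (Xmat * Ymat ω) ^ k * Xmat + Ymat ω * (Xmat * Ymat ω) ^ k
        = aEnt ω k • (Xmat + Ymat ω)) ∧
    ((Xmat * Ymat ω) ^ n * Xmat = Ymat ω * (Xmat * Ymat ω) ^ n) ∧
    ((Xmat * Ymat ω) ^ n * Xmat = (- bEnt ω n) • (Xmat + Ymat ω)) := by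
  have h0 : (AB ω n).1 + 2 * (AB ω n).2 = 0 := by
    rw [S_eq_T, T_def]; exact hω
  obtain ⟨h3a, h3b⟩ := part3core ω n hn h0
  exact ⟨fun k hk _ => part1 ω k hk, fun k hk _ => part2 ω k hk, h3a, h3b⟩
end

section
/- Let R be a commutative ring and let M be a 2n×2n matrix over R written in block form M = [[A, B],[C, D]] with n×n blocks A, B, C, D. Suppose each of A, B, C, D is lower triangular, and in addition C is strictly lower triangular (all its diagonal entries are 0). Then det M = (det A)·(det D); in particular det M is the product of all diagonal entries of M. -/
/-! Listing the indices in the order `inr 0, inl 0, inr 1, inl 1, …` (the `D`-index of each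
diagonal position just before its `A`-index) makes `fromBlocks A B C D` lower triangular: an entry
above the diagonal then lies strictly above the diagonal of `A`, `B` or `D`, or on or above the
diagonal of `C`. Its determinant is therefore the product of its diagonal entries. -/

open Finset Matrix

def sumEquivLexBool (α : Type*) : α ⊕ α ≃ Lex (α × Bool) :=
  (Equiv.sumComm α α).trans <| (Equiv.boolProdEquivSum α).symm.trans <|
    (Equiv.prodComm Bool α).trans toLex

@[simp]
lemma sumEquivLexBool_inl {α : Type*} (a : α) : sumEquivLexBool α (.inl a) = toLex (a, true) := rfl

@[simp]
lemma sumEquivLexBool_inr {α : Type*} (a : α) : sumEquivLexBool α (.inr a) = toLex (a, false) := rfl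

namespace Matrix

variable {m R : Type*} [LinearOrder m]

theorem isLowerTriangular_reindex_fromBlocks [Zero R] {A B C D : Matrix m m R}
    (hA : A.IsLowerTriangular) (hB : B.IsLowerTriangular) (hC : ∀ i j, i ≤ j → C i j = 0)
    (hD : D.IsLowerTriangular) :
    (reindex (sumEquivLexBool m) (sumEquivLexBool m) (fromBlocks A B C D)).IsLowerTriangular := by
  rw [IsLowerTriangular, blockTriangular_reindex_iff]
  rintro (i | i) (j | j) h <;>
    simp only [Function.comp_apply, sumEquivLexBool_inl, sumEquivLexBool_inr,
      OrderDual.toDual_lt_toDual, Prod.Lex.toLex_lt_toLex, Bool.lt_iff] at h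
  · exact hA (by simpa using h)
  · exact hB (by simpa using h)
  · exact hC i j (by simpa [le_iff_lt_or_eq] using h)
  · exact hD (by simpa using h)

theorem det_fromBlocks_of_isLowerTriangular [Fintype m] [CommRing R] {A B C D : Matrix m m R}
    (hA : A.IsLowerTriangular) (hB : B.IsLowerTriangular) (hC : ∀ i j, i ≤ j → C i j = 0)
    (hD : D.IsLowerTriangular) :
    (fromBlocks A B C D).det = (∏ i, A i i) * ∏ i, D i i := by
  rw [← det_reindex_self (sumEquivLexBool m),
    det_of_isLowerTriangular _ (isLowerTriangular_reindex_fromBlocks hA hB hC hD)]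
  simp only [reindex_apply, submatrix_apply]
  rw [Equiv.prod_comp (sumEquivLexBool m).symm (fun x => fromBlocks A B C D x x),
    Fintype.prod_sum_type]
  rfl

end Matrix

theorem stmt_6 (n : ℕ) (R : Type*) [CommRing R]
    (A B C D : Matrix (Fin n) (Fin n) R)
    (hA : ∀ i j : Fin n, i < j → A i j = 0)
    (hB : ∀ i j : Fin n, i < j → B i j = 0)
    (hC : ∀ i j : Fin n, i ≤ j → C i j = 0)
    (hD : ∀ i j : Fin n, i < j → D i j = 0) :
    (Matrix.fromBlocks A B C D).det = A.det * D.det ∧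
    (Matrix.fromBlocks A B C D).det = (∏ i : Fin n, A i i) * ∏ i : Fin n, D i i := by
  have hdet := det_fromBlocks_of_isLowerTriangular (fun i j ↦ hA i j) (fun i j ↦ hB i j) hC
    (fun i j ↦ hD i j)
  rw [det_of_isLowerTriangular A hA, det_of_isLowerTriangular D hD]
  exact ⟨hdet, hdet⟩
end

section
/- Let n ≥ 1, p = 2n+1 an odd prime, q ≥ 1, and let ζ ∈ ℂ be a primitive 2q-th root of unity. Let P and Q be the 2n×2n integer matrices defined by: P_{i,j} = 1 if i+j = 2n+1 and 0 otherwise; Q_{i,1} = −1 for all i, Q_{i,j} = 1 if i ≥ 2 and i+j = 2n+2, and 0 otherwise. Set S = ζ·P (a 2n×2n complex matrix) and A = P·Q. Then S^{2q} = I, A^p = I, and S·A·S⁻¹ = A⁻¹; consequently s ↦ ζ·P, sa ↦ ζ·Q defines a representation of the metacyclic group N(q,p) = ⟨s,a | s^{2q} = a^p = 1, s a s⁻¹ = a⁻¹⟩ on GL(2n,ℂ). -/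
open Finset Matrix

/-- `P` viewed as a complex matrix. -/
noncomputable def PmatC (n : ℕ) : Matrix (Fin (2 * n)) (Fin (2 * n)) ℂ :=
  (Pmat n).map (Int.cast : ℤ → ℂ)

/-- `Q` viewed as a complex matrix. -/
noncomputable def QmatC (n : ℕ) : Matrix (Fin (2 * n)) (Fin (2 * n)) ℂ :=
  (Qmat n).map (Int.cast : ℤ → ℂ)

/-- auxiliary matrix: the k-th power of `P*Q`. -/
noncomputable def Bmat (n : ℕ) (k : ZMod (2 * n + 1)) : Matrix (Fin (2 * n)) (Fin (2 * n)) ℂ :=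
  Matrix.of fun i j =>
    if (((j : ℕ) + 1 : ℕ) : ZMod (2 * n + 1)) = k then -1
    else if ((i : ℕ) : ZMod (2 * n + 1)) + k = ((j : ℕ) : ZMod (2 * n + 1)) then 1 else 0

lemma cast_inj' (n : ℕ) {a b : ℕ} (ha : a < 2 * n + 1) (hb : b < 2 * n + 1) :
    ((a : ZMod (2 * n + 1)) = (b : ZMod (2 * n + 1))) ↔ a = b := by
  rw [ZMod.natCast_eq_natCast_iff, Nat.ModEq, Nat.mod_eq_of_lt ha, Nat.mod_eq_of_lt hb]

lemma PC_apply (n : ℕ) (i j : Fin (2 * n)) :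
    PmatC n i j = if (i : ℕ) + (j : ℕ) = 2 * n - 1 then 1 else 0 := by
  simp [PmatC, Pmat, Matrix.map_apply, apply_ite (Int.cast : ℤ → ℂ)]

lemma QC_apply (n : ℕ) (i j : Fin (2 * n)) :
    QmatC n i j = if (j : ℕ) = 0 then -1
      else if 1 ≤ (i : ℕ) ∧ (i : ℕ) + (j : ℕ) = 2 * n then 1 else 0 := by
  simp [QmatC, Qmat, Matrix.map_apply, apply_ite (Int.cast : ℤ → ℂ)]

lemma B_zero (n : ℕ) : Bmat n 0 = 1 := by
  ext i j
  have hi := i.isLt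
  have hj := j.isLt
  rw [Bmat, of_apply, one_apply]
  rw [show (0 : ZMod (2*n+1)) = ((0:ℕ) : ZMod (2*n+1)) by norm_num]
  rw [if_neg (by rw [cast_inj' n (by omega) (by omega)]; omega)]
  rw [Nat.cast_zero, add_zero]
  simp [cast_inj' n (show (i:ℕ) < 2*n+1 by omega) (show (j:ℕ) < 2*n+1 by omega), Fin.ext_iff]


lemma P_sq (n : ℕ) : PmatC n * PmatC n = 1 := by
  ext i j
  have hi := i.isLt
  have hj := j.isLt
  rw [mul_apply, one_apply]
  have hsum : ∀ m : Fin (2*n), PmatC n i m * PmatC n m j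
      = if m = (⟨2*n-1-(i:ℕ), by omega⟩ : Fin (2*n)) then PmatC n m j else 0 := by
    intro m
    have hm := m.isLt
    rw [PC_apply]
    rcases eq_or_ne m (⟨2*n-1-(i:ℕ), by omega⟩ : Fin (2*n)) with h | h
    · have hv : (m:ℕ) = 2*n-1-(i:ℕ) := by rw [h]
      rw [if_pos h, if_pos (by omega), one_mul]
    · have hv : (m:ℕ) ≠ 2*n-1-(i:ℕ) := fun hc => h (Fin.ext hc)
      rw [if_neg h, if_neg (by omega), zero_mul]
  rw [Finset.sum_congr rfl (fun m _ => hsum m), Finset.sum_ite_eq' Finset.univ,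
    if_pos (Finset.mem_univ _), PC_apply]
  simp only [Fin.ext_iff]
  have hv : ((⟨2*n-1-(i:ℕ), by omega⟩ : Fin (2*n)) : ℕ) = 2*n-1-(i:ℕ) := rfl
  rcases eq_or_ne (i:ℕ) (j:ℕ) with h | h
  · rw [if_pos (by omega), if_pos h]
  · rw [if_neg (by omega), if_neg h]


lemma hp0 (n : ℕ) : ((2*n : ℕ) : ZMod (2*n+1)) + 1 = 0 := by
  have h := ZMod.natCast_self (2*n+1)
  rwa [Nat.cast_add, Nat.cast_one] at h

lemma PQ_eq (n : ℕ) : PmatC n * QmatC n = Bmat n 1 := by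
  ext i j
  have hi := i.isLt
  have hj := j.isLt
  rw [mul_apply]
  have hsum : ∀ m : Fin (2*n), PmatC n i m * QmatC n m j
      = if m = (⟨2*n-1-(i:ℕ), by omega⟩ : Fin (2*n)) then QmatC n m j else 0 := by
    intro m
    have hm := m.isLt
    rw [PC_apply]
    rcases eq_or_ne m (⟨2*n-1-(i:ℕ), by omega⟩ : Fin (2*n)) with h | h
    · have hv : (m:ℕ) = 2*n-1-(i:ℕ) := by rw [h]
      rw [if_pos h, if_pos (by omega), one_mul]
    · have hv : (m:ℕ) ≠ 2*n-1-(i:ℕ) := fun hc => h (Fin.ext hc)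
      rw [if_neg h, if_neg (by omega), zero_mul]
  rw [Finset.sum_congr rfl (fun m _ => hsum m), Finset.sum_ite_eq' Finset.univ,
    if_pos (Finset.mem_univ _), QC_apply, Bmat, of_apply]
  have hv : ((⟨2*n-1-(i:ℕ), by omega⟩ : Fin (2*n)) : ℕ) = 2*n-1-(i:ℕ) := rfl
  rw [hv]
  have h1 : ((((j:ℕ)+1 : ℕ)) : ZMod (2*n+1)) = 1 ↔ (j:ℕ) = 0 := by
    rw [show (1 : ZMod (2*n+1)) = ((1:ℕ) : ZMod (2*n+1)) by norm_num,
      cast_inj' n (by omega) (by omega)]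
    omega
  have h2 : ((i:ℕ) : ZMod (2*n+1)) + 1 = ((j:ℕ) : ZMod (2*n+1)) ↔
      (1 ≤ 2*n-1-(i:ℕ) ∧ (2*n-1-(i:ℕ)) + (j:ℕ) = 2*n) := by
    rw [show ((i:ℕ) : ZMod (2*n+1)) + 1 = (((i:ℕ)+1 : ℕ) : ZMod (2*n+1)) by push_cast; ring,
      cast_inj' n (by omega) (by omega)]
    omega
  exact if_congr h1.symm rfl (if_congr h2.symm rfl rfl)

lemma QP_eq (n : ℕ) : QmatC n * PmatC n = Bmat n ((2*n : ℕ) : ZMod (2*n+1)) := by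
  ext i j
  have hi := i.isLt
  have hj := j.isLt
  rw [mul_apply]
  have hsum : ∀ m : Fin (2*n), QmatC n i m * PmatC n m j
      = if m = (⟨2*n-1-(j:ℕ), by omega⟩ : Fin (2*n)) then QmatC n i m else 0 := by
    intro m
    have hm := m.isLt
    rw [PC_apply]
    rcases eq_or_ne m (⟨2*n-1-(j:ℕ), by omega⟩ : Fin (2*n)) with h | h
    · have hv : (m:ℕ) = 2*n-1-(j:ℕ) := by rw [h]
      rw [if_pos h, if_pos (by omega), mul_one]
    · have hv : (m:ℕ) ≠ 2*n-1-(j:ℕ) := fun hc => h (Fin.ext hc)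
      rw [if_neg h, if_neg (by omega), mul_zero]
  rw [Finset.sum_congr rfl (fun m _ => hsum m), Finset.sum_ite_eq' Finset.univ,
    if_pos (Finset.mem_univ _), QC_apply, Bmat, of_apply]
  have hv : ((⟨2*n-1-(j:ℕ), by omega⟩ : Fin (2*n)) : ℕ) = 2*n-1-(j:ℕ) := rfl
  rw [hv]
  have h1 : ((((j:ℕ)+1 : ℕ)) : ZMod (2*n+1)) = ((2*n : ℕ) : ZMod (2*n+1)) ↔
      2*n-1-(j:ℕ) = 0 := by
    rw [cast_inj' n (by omega) (by omega)]
    omega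
  have h2 : ((i:ℕ) : ZMod (2*n+1)) + ((2*n : ℕ) : ZMod (2*n+1)) = ((j:ℕ) : ZMod (2*n+1)) ↔
      (1 ≤ (i:ℕ) ∧ (i:ℕ) + (2*n-1-(j:ℕ)) = 2*n) := by
    constructor
    · intro h
      have hc : ((i:ℕ) : ZMod (2*n+1)) = (((j:ℕ)+1 : ℕ) : ZMod (2*n+1)) := by
        push_cast
        linear_combination h - hp0 n
      rw [cast_inj' n (by omega) (by omega)] at hc
      omega
    · intro h
      have hc : (i:ℕ) = (j:ℕ)+1 := by omega
      have hc2 : ((i:ℕ) : ZMod (2*n+1)) = (((j:ℕ)+1 : ℕ) : ZMod (2*n+1)) := by rw [hc]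
      push_cast at hc2
      linear_combination hc2 + hp0 n
  exact if_congr h1.symm rfl (if_congr h2.symm rfl rfl)


lemma castne (n : ℕ) {a : ℕ} (h0 : 0 < a) (h1 : a < 2*n+1) :
    ((a:ℕ) : ZMod (2*n+1)) ≠ 0 := by
  intro h
  rw [show (0 : ZMod (2*n+1)) = ((0:ℕ) : ZMod (2*n+1)) by norm_num,
    cast_inj' n h1 (by omega)] at h
  omega

lemma B_step (n : ℕ) (k : ZMod (2*n+1)) :
    Bmat n 1 * Bmat n k = Bmat n (k+1) := by
  ext i j
  have hi := i.isLt
  have hj := j.isLt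
  haveI : Fact (1 < 2*n+1) := ⟨by omega⟩
  rw [mul_apply]
  have hI1 : ((i:ℕ) : ZMod (2*n+1)) + 1 ≠ 0 := by
    have h := castne n (a := (i:ℕ)+1) (by omega) (by omega)
    push_cast at h
    exact h
  set i0 : Fin (2*n) := ⟨0, by omega⟩ with hi0
  have hv0 : (i0:ℕ) = 0 := by rw [hi0]
  have hB1 : ∀ m : Fin (2*n), Bmat n 1 i m =
      (if m = i0 then -1 else 0) + (if (m:ℕ) = (i:ℕ)+1 then 1 else 0) := by
    intro m
    have hm := m.isLt
    have h1 : ((((m:ℕ)+1 : ℕ)) : ZMod (2*n+1)) = 1 ↔ m = i0 := by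
      rw [show (1 : ZMod (2*n+1)) = ((1:ℕ) : ZMod (2*n+1)) by norm_num,
        cast_inj' n (by omega) (by omega), Fin.ext_iff]
      omega
    have h2 : ((i:ℕ) : ZMod (2*n+1)) + 1 = ((m:ℕ) : ZMod (2*n+1)) ↔ (m:ℕ) = (i:ℕ)+1 := by
      rw [show ((i:ℕ) : ZMod (2*n+1)) + 1 = (((i:ℕ)+1 : ℕ) : ZMod (2*n+1)) by push_cast; ring,
        cast_inj' n (by omega) (by omega)]
      omega
    rw [Bmat, of_apply]
    rcases eq_or_ne m i0 with h | h
    · rw [if_pos (h1.mpr h), if_pos h,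
        if_neg (show ¬ ((m:ℕ) = (i:ℕ)+1) by rw [h, hv0]; omega)]
      ring
    · rw [if_neg (fun hc => h (h1.mp hc)), if_neg h, zero_add]
      exact if_congr h2 rfl rfl
  have hsplit : ∀ m : Fin (2*n), Bmat n 1 i m * Bmat n k m j =
      (if m = i0 then -(Bmat n k m j) else 0)
        + (if (m:ℕ) = (i:ℕ)+1 then Bmat n k m j else 0) := by
    intro m
    rw [hB1 m, add_mul, ite_mul, ite_mul]
    simp only [neg_one_mul, one_mul, zero_mul]
  rw [Finset.sum_congr rfl (fun m _ => hsplit m),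
    Finset.sum_add_distrib, Finset.sum_ite_eq' Finset.univ, if_pos (Finset.mem_univ _)]
  have ej : (((j:ℕ)+1 : ℕ) : ZMod (2*n+1)) = ((j:ℕ) : ZMod (2*n+1)) + 1 := by
    push_cast; ring
  have e0 : ((i0:ℕ) : ZMod (2*n+1)) = 0 := by rw [hv0]; exact Nat.cast_zero
  by_cases hi1 : (i:ℕ)+1 < 2*n
  · have hI2 : ((i:ℕ) : ZMod (2*n+1)) + 2 ≠ 0 := by
      have h := castne n (a := (i:ℕ)+2) (by omega) (by omega)
      push_cast at h
      exact h
    have hsw : ∀ m : Fin (2*n), (if (m:ℕ) = (i:ℕ)+1 then Bmat n k m j else 0)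
        = (if m = (⟨(i:ℕ)+1, hi1⟩ : Fin (2*n)) then Bmat n k m j else 0) :=
      fun m => if_congr ⟨fun h => Fin.ext h, fun h => by rw [h]⟩ rfl rfl
    rw [Finset.sum_congr rfl (fun m _ => hsw m),
      Finset.sum_ite_eq' Finset.univ, if_pos (Finset.mem_univ _)]
    simp only [Bmat, of_apply, ej, e0, zero_add,
      show (((⟨(i:ℕ)+1, hi1⟩ : Fin (2*n)) : ℕ) : ZMod (2*n+1))
          = ((i:ℕ) : ZMod (2*n+1)) + 1 from by push_cast; ring]
    by_cases h1 : ((j:ℕ) : ZMod (2*n+1)) + 1 = k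
    · rw [if_pos h1, if_pos h1,
        if_neg (show ¬ (((j:ℕ) : ZMod (2*n+1)) + 1 = k + 1) from
          fun h => one_ne_zero (α := ZMod (2*n+1)) (by linear_combination h1 - h)),
        if_neg (show ¬ (((i:ℕ) : ZMod (2*n+1)) + (k + 1) = ((j:ℕ) : ZMod (2*n+1))) from
          fun h => hI2 (by linear_combination h + h1))]
      ring
    · rw [if_neg h1, if_neg h1]
      by_cases h2 : k = ((j:ℕ) : ZMod (2*n+1))
      · rw [if_pos h2, if_neg (show ¬ (((i:ℕ) : ZMod (2*n+1)) + 1 + k = ((j:ℕ) : ZMod (2*n+1)))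
            from fun h => hI1 (by linear_combination h - h2)),
          if_pos (show ((j:ℕ) : ZMod (2*n+1)) + 1 = k + 1 by rw [h2])]
        norm_num
      · rw [if_neg h2, if_neg (show ¬ (((j:ℕ) : ZMod (2*n+1)) + 1 = k + 1) from
            fun h => h2 (add_right_cancel h).symm),
          if_congr (show (((i:ℕ) : ZMod (2*n+1)) + 1 + k = ((j:ℕ) : ZMod (2*n+1))) ↔
              (((i:ℕ) : ZMod (2*n+1)) + (k + 1) = ((j:ℕ) : ZMod (2*n+1))) from by
            constructor <;> intro h <;> linear_combination h) rfl rfl]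
        ring
  · have hI2' : ((i:ℕ) : ZMod (2*n+1)) + 2 = 0 := by
      have hc : ((i:ℕ)+2 : ℕ) = 2*n+1 := by omega
      have h : (((i:ℕ)+2 : ℕ) : ZMod (2*n+1)) = 0 := by rw [hc]; exact ZMod.natCast_self _
      push_cast at h
      exact h
    rw [Finset.sum_eq_zero (fun m _ => if_neg (by have := m.isLt; omega))]
    simp only [Bmat, of_apply, ej, e0, zero_add]
    by_cases h1 : ((j:ℕ) : ZMod (2*n+1)) + 1 = k
    · rw [if_pos h1,
        if_neg (show ¬ (((j:ℕ) : ZMod (2*n+1)) + 1 = k + 1) from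
          fun h => one_ne_zero (α := ZMod (2*n+1)) (by linear_combination h1 - h)),
        if_pos (show ((i:ℕ) : ZMod (2*n+1)) + (k + 1) = ((j:ℕ) : ZMod (2*n+1)) by
          linear_combination hI2' - h1)]
      norm_num
    · rw [if_neg h1]
      by_cases h2 : k = ((j:ℕ) : ZMod (2*n+1))
      · rw [if_pos h2, if_pos (show ((j:ℕ) : ZMod (2*n+1)) + 1 = k + 1 by rw [h2])]
        norm_num
      · rw [if_neg h2, if_neg (show ¬ (((j:ℕ) : ZMod (2*n+1)) + 1 = k + 1) from
            fun h => h2 (add_right_cancel h).symm),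
          if_neg (show ¬ (((i:ℕ) : ZMod (2*n+1)) + (k + 1) = ((j:ℕ) : ZMod (2*n+1))) from
            fun h => h1 (by linear_combination h.symm + hI2'))]
        norm_num


lemma B_pow (n : ℕ) : ∀ k : ℕ, (Bmat n 1)^k = Bmat n ((k : ℕ) : ZMod (2*n+1))
  | 0 => by rw [pow_zero, Nat.cast_zero, B_zero]
  | (k+1) => by rw [pow_succ', B_pow n k, B_step, Nat.cast_add, Nat.cast_one]

theorem stmt_7 (n q : ℕ) (hn : 1 ≤ n) (hp : Nat.Prime (2 * n + 1)) (hq : 1 ≤ q)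
    (ζ : ℂ) (hζ : IsPrimitiveRoot ζ (2 * q)) :
    (ζ • PmatC n) ^ (2 * q) = 1 ∧
    (PmatC n * QmatC n) ^ (2 * n + 1) = 1 ∧
    (ζ • PmatC n) * (PmatC n * QmatC n) * (ζ • PmatC n)⁻¹ = (PmatC n * QmatC n)⁻¹ := by
  have hP2 : PmatC n * PmatC n = 1 := P_sq n
  have hApow : (PmatC n * QmatC n) ^ (2*n+1) = 1 := by
    rw [PQ_eq, B_pow, ZMod.natCast_self, B_zero]
  have hζ0 : (ζ : ℂ) ≠ 0 := hζ.ne_zero (by omega)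
  have hSinv : (ζ • PmatC n)⁻¹ = ζ⁻¹ • PmatC n := Matrix.inv_eq_right_inv (by
    rw [Matrix.smul_mul, Matrix.mul_smul, smul_smul, mul_inv_cancel₀ hζ0, one_smul, hP2])
  have hAQP : (PmatC n * QmatC n) * (QmatC n * PmatC n) = 1 := by
    rw [PQ_eq, QP_eq, B_step, hp0 n, B_zero]
  have hAinv : (PmatC n * QmatC n)⁻¹ = QmatC n * PmatC n := Matrix.inv_eq_right_inv hAQP
  refine ⟨?_, hApow, ?_⟩
  · rw [smul_pow, hζ.pow_eq_one, one_smul, pow_mul, pow_two, hP2, one_pow]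
  · rw [hSinv, hAinv, Matrix.smul_mul, Matrix.mul_smul, smul_mul_assoc, smul_smul,
      inv_mul_cancel₀ hζ0, one_smul, ← mul_assoc, hP2, one_mul]
end

section
/- For n ≥ 1 and 0 ≤ k ≤ n set a_k^{(n)} = C(2n−k+1, 2n−2k+1) + C(2n−k, 2n−2k+1), with the conventions a_0^{(0)} = 1 and a_k^{(n)} = 0 whenever k < 0 or k > n. Then for all n ≥ 2 and 0 ≤ k ≤ n: a_k^{(n)} = a_k^{(n−1)} + 2·a_{k−1}^{(n−1)} − a_{k−2}^{(n−2)}. -/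
open Finset

/-- `a_k^{(n)} = C(2n−k+1, 2n−2k+1) + C(2n−k, 2n−2k+1)` for `n ≥ 1` and `0 ≤ k ≤ n`,
with the conventions `a_0^{(0)} = 1` and `a_k^{(n)} = 0` for `k < 0` or `k > n`
(the index `k` is an integer). -/
def aExt (n : ℕ) (k : ℤ) : ℤ :=
  if 0 ≤ k ∧ k ≤ (n : ℤ) then
    if n = 0 then 1
    else ((2 * n - k.toNat + 1).choose (2 * n - 2 * k.toNat + 1) : ℤ)
      + ((2 * n - k.toNat).choose (2 * n - 2 * k.toNat + 1) : ℤ)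
  else 0

lemma key_choose (a c : ℕ) :
    ((a+3).choose (c+3) + (a+2).choose (c+3) : ℤ)
      = ((a+1).choose (c+1) + a.choose (c+1) : ℤ)
        + 2 * ((a+2).choose (c+3) + (a+1).choose (c+3))
        - ((a+1).choose (c+3) + a.choose (c+3)) := by
  have h1 : (a+3).choose (c+3) = (a+2).choose (c+2) + (a+2).choose (c+3) :=
    Nat.choose_succ_succ _ _
  have h2 : (a+2).choose (c+2) = (a+1).choose (c+1) + (a+1).choose (c+2) :=
    Nat.choose_succ_succ _ _
  have h3 : (a+1).choose (c+2) = a.choose (c+1) + a.choose (c+2) :=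
    Nat.choose_succ_succ _ _
  have h4 : (a+1).choose (c+3) = a.choose (c+2) + a.choose (c+3) :=
    Nat.choose_succ_succ _ _
  push_cast [h1, h2, h3, h4]
  ring

lemma aExt_eval (m : ℕ) (j : ℕ) (hm : m ≠ 0) (hj : j ≤ m) :
    aExt m (j : ℤ) =
      ((2 * m - j + 1).choose (2 * m - 2 * j + 1) : ℤ)
        + ((2 * m - j).choose (2 * m - 2 * j + 1) : ℤ) := by
  have h : (0 : ℤ) ≤ (j : ℤ) ∧ (j : ℤ) ≤ (m : ℤ) := ⟨by positivity, by exact_mod_cast hj⟩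
  simp [aExt, h, hm]

lemma aExt_zero (m : ℕ) (hm : m ≠ 0) : aExt m 0 = 1 := by
  have := aExt_eval m 0 hm (Nat.zero_le _)
  simpa [Nat.choose_self, Nat.choose_succ_self] using this

lemma aExt_one (m : ℕ) (hm : m ≠ 0) : aExt m 1 = 2 * (m : ℤ) + 1 := by
  have h1 : 1 ≤ m := Nat.one_le_iff_ne_zero.mpr hm
  have := aExt_eval m 1 hm h1
  have e1 : 2 * m - 1 + 1 = 2 * m := by omega
  have e2 : 2 * m - 2 * 1 + 1 = 2 * m - 1 := by omega
  rw [e1, e2] at this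
  have e3 : (2 * m).choose (2 * m - 1) = 2 * m := by
    have h4 : 2 * m - (2 * m - 1) = 1 := by omega
    rw [← h4, Nat.choose_symm (by omega), h4, Nat.choose_one_right]
  have e4 : (2 * m - 1).choose (2 * m - 1) = 1 := Nat.choose_self _
  rw [e3, e4] at this
  push_cast at this ⊢
  linarith

lemma aExt_last (m : ℕ) (hm : m ≠ 0) : aExt m (m : ℤ) = 2 * (m : ℤ) + 1 := by
  have := aExt_eval m m hm le_rfl
  have e1 : 2 * m - m + 1 = m + 1 := by omega
  have e2 : 2 * m - 2 * m + 1 = 1 := by omega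
  have e3 : 2 * m - m = m := by omega
  rw [e1, e2, e3, Nat.choose_one_right, Nat.choose_one_right] at this
  rw [this]; push_cast; ring

lemma aExt_neg (m : ℕ) (k : ℤ) (hk : k < 0) : aExt m k = 0 := by
  simp [aExt]; intro h; omega

lemma aExt_gt (m : ℕ) (k : ℤ) (hk : (m : ℤ) < k) : aExt m k = 0 := by
  simp [aExt]; intro h; omega

theorem stmt_12 (n : ℕ) (hn : 2 ≤ n) (k : ℤ) (hk0 : 0 ≤ k) (hkn : k ≤ (n : ℤ)) :
    aExt n k = aExt (n - 1) k + 2 * aExt (n - 1) (k - 1) - aExt (n - 2) (k - 2) := by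
  lift k to ℕ using hk0 with j
  have hjn : j ≤ n := by exact_mod_cast hkn
  rcases Nat.lt_or_ge n 3 with hn3 | hn3
  · have hn2 : n = 2 := by omega
    subst hn2
    interval_cases j <;> simp [aExt]
  have hn1 : n - 1 ≠ 0 := by omega
  have hn2 : n - 2 ≠ 0 := by omega
  have hnne : n ≠ 0 := by omega
  rcases Nat.lt_or_ge j 2 with hj2 | hj2
  · interval_cases j
    · push_cast
      rw [aExt_zero n hnne, aExt_zero (n-1) hn1,
        aExt_neg (n-1) _ (by norm_num), aExt_neg (n-2) _ (by norm_num)]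
      ring
    · push_cast
      rw [aExt_one n hnne, aExt_one (n-1) hn1, aExt_zero (n-1) hn1,
        aExt_neg (n-2) _ (by norm_num)]
      push_cast [Nat.cast_sub (by omega : 1 ≤ n)]
      ring
  rcases Nat.lt_or_ge j n with hjlt | hjge
  · -- general case 2 ≤ j ≤ n - 1
    obtain ⟨a, ha⟩ : ∃ a, 2 * n - j = a + 2 := ⟨2 * n - j - 2, by omega⟩
    obtain ⟨c, hc⟩ : ∃ c, 2 * n - 2 * j = c + 2 := ⟨2 * n - 2 * j - 2, by omega⟩
    have ej1 : ((j:ℤ) - 1) = ((j - 1 : ℕ) : ℤ) := by push_cast [Nat.cast_sub (by omega : 1 ≤ j)]; ring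
    have ej2 : ((j:ℤ) - 2) = ((j - 2 : ℕ) : ℤ) := by push_cast [Nat.cast_sub (by omega : 2 ≤ j)]; ring
    rw [aExt_eval n j hnne hjn, aExt_eval (n-1) j hn1 (by omega),
      ej1, ej2, aExt_eval (n-1) (j-1) hn1 (by omega), aExt_eval (n-2) (j-2) hn2 (by omega)]
    have i1 : 2 * n - j + 1 = a + 3 := by omega
    have i2 : 2 * n - 2 * j + 1 = c + 3 := by omega
    have i3 : 2 * n - j = a + 2 := ha
    have i4 : 2 * (n-1) - j + 1 = a + 1 := by omega
    have i5 : 2 * (n-1) - 2 * j + 1 = c + 1 := by omega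
    have i6 : 2 * (n-1) - j = a := by omega
    have i7 : 2 * (n-1) - (j-1) + 1 = a + 2 := by omega
    have i8 : 2 * (n-1) - 2 * (j-1) + 1 = c + 3 := by omega
    have i9 : 2 * (n-1) - (j-1) = a + 1 := by omega
    have i10 : 2 * (n-2) - (j-2) + 1 = a + 1 := by omega
    have i11 : 2 * (n-2) - 2 * (j-2) + 1 = c + 3 := by omega
    have i12 : 2 * (n-2) - (j-2) = a := by omega
    rw [i1, i2, i3, i4, i5, i6, i7, i8, i9, i10, i11, i12]
    have := key_choose a c
    linarith
  · -- j = n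
    have hj : j = n := by omega
    rw [hj]
    have ej1 : ((n:ℤ) - 1) = ((n - 1 : ℕ) : ℤ) := by push_cast [Nat.cast_sub (by omega : 1 ≤ n)]; ring
    have ej2 : ((n:ℤ) - 2) = ((n - 2 : ℕ) : ℤ) := by push_cast [Nat.cast_sub (by omega : 2 ≤ n)]; ring
    rw [aExt_last n hnne, aExt_gt (n-1) n (by exact_mod_cast by omega : ((n-1:ℕ):ℤ) < (n:ℤ)),
      ej1, ej2, aExt_last (n-1) hn1, aExt_last (n-2) hn2]
    push_cast [Nat.cast_sub (by omega : 1 ≤ n), Nat.cast_sub (by omega : 2 ≤ n)]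
    ring
end

section
/- For n ≥ 0 and m ≥ 0 define F(n,m) = Σ_{j=0}^{n} a_{n−j}^{(n)}·b_{m+j}. Then for all n ≥ 2 and m ≥ 0: F(n,m) = F(n−1, m+1) + 2·F(n−1, m) − F(n−2, m). -/
open Finset

/-- The signed Catalan number `b_s = ((−1)^s/(s+2))·C(2s+2, s+1)` (an integer;
the division is exact). -/
def bCat (s : ℕ) : ℤ := (-1) ^ s * ((((2 * s + 2).choose (s + 1)) / (s + 2) : ℕ) : ℤ)

/-- `F(n,m) = Σ_{j=0}^{n} a_{n−j}^{(n)}·b_{m+j}`. -/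
def Ffun (n m : ℕ) : ℤ := ∑ j ∈ Finset.range (n + 1), aExt n ((n : ℤ) - j) * bCat (m + j)

/-!
Writing `j = n - k`, the coefficient `a_{n-j}^{(n)}` equals `C(n+j+1, 2j+1) + C(n+j, 2j+1)` for all
`n, j` (including `n = 0` and `j > n`, where it vanishes). In this form the recurrence
`a_k^{(n)} = a_k^{(n-1)} + 2 a_{k-1}^{(n-1)} - a_{k-2}^{(n-2)}` follows from Pascal's rule alone,
and it passes to `F(n, m)` for any sequence in place of the signed Catalan numbers `b_s`.
-/

theorem Nat.choose_add_two_add_choose (N B : ℕ) :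
    (N + 2).choose (B + 2) + N.choose (B + 2) = N.choose B + 2 * (N + 1).choose (B + 2) := by
  rw [Nat.choose_succ_succ (N + 1), Nat.choose_succ_succ N B, Nat.choose_succ_succ N (B + 1)]
  ring

/-- `aCoeff n j = a_{n-j}^{(n)}`, indexed so that no truncated subtraction occurs. -/
def aCoeff (n j : ℕ) : ℕ := (n + j + 1).choose (2 * j + 1) + (n + j).choose (2 * j + 1)

theorem aCoeff_eq_zero_of_lt {n j : ℕ} (h : n < j) : aCoeff n j = 0 := by
  simp only [aCoeff, Nat.add_eq_zero_iff]
  constructor <;> exact Nat.choose_eq_zero_of_lt (by omega)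

theorem aExt_natCast_sub (n j : ℕ) : aExt n ((n : ℤ) - j) = aCoeff n j := by
  rcases lt_or_ge n j with h | h
  · rw [aCoeff_eq_zero_of_lt h, aExt, if_neg (by omega), Nat.cast_zero]
  · rw [aExt, if_pos (by omega), aCoeff, show ((n : ℤ) - j).toNat = n - j by omega]
    split_ifs with hn
    · subst hn
      obtain rfl : j = 0 := by omega
      rfl
    · rw [show 2 * n - (n - j) + 1 = n + j + 1 by omega, show 2 * n - (n - j) = n + j by omega,
        show 2 * n - 2 * (n - j) + 1 = 2 * j + 1 by omega]
      push_cast; rfl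

theorem aCoeff_add_two_zero (p : ℕ) : aCoeff (p + 2) 0 + aCoeff p 0 = 2 * aCoeff (p + 1) 0 := by
  simp only [aCoeff, Nat.choose_one_right, mul_zero, zero_add, add_zero]
  ring

theorem aCoeff_add_two_succ (p j : ℕ) :
    aCoeff (p + 2) (j + 1) + aCoeff p (j + 1) = aCoeff (p + 1) j + 2 * aCoeff (p + 1) (j + 1) := by
  have h₁ := Nat.choose_add_two_add_choose (p + j + 2) (2 * j + 1)
  have h₂ := Nat.choose_add_two_add_choose (p + j + 1) (2 * j + 1)
  simp only [aCoeff]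
  ring_nf at h₁ h₂ ⊢
  omega

def aSum (b : ℕ → ℤ) (n m : ℕ) : ℤ := ∑ j ∈ range (n + 1), (aCoeff n j : ℤ) * b (m + j)

theorem aSum_eq_sum_range (b : ℕ → ℤ) {n N : ℕ} (h : n < N) (m : ℕ) :
    aSum b n m = ∑ j ∈ range N, (aCoeff n j : ℤ) * b (m + j) := by
  refine sum_subset (range_subset_range.2 h) fun j _ hj => ?_
  rw [aCoeff_eq_zero_of_lt (by simpa using hj), Nat.cast_zero, zero_mul]

theorem aSum_add_two (b : ℕ → ℤ) (p m : ℕ) :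
    aSum b (p + 2) m = aSum b (p + 1) (m + 1) + 2 * aSum b (p + 1) m - aSum b p m := by
  -- pad to a common range, then split off `j = 0`, the only index without a shifted partner
  rw [aSum_eq_sum_range b (N := p + 3) (by omega), aSum_eq_sum_range b (N := p + 2) (by omega),
    aSum_eq_sum_range b (N := p + 3) (by omega), aSum_eq_sum_range b (N := p + 3) (by omega),
    sum_range_succ' _ (p + 2), sum_range_succ' _ (p + 2), sum_range_succ' _ (p + 2), mul_add,
    mul_sum]
  have h₀ : (aCoeff (p + 2) 0 : ℤ) = 2 * aCoeff (p + 1) 0 - aCoeff p 0 := by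
    have := aCoeff_add_two_zero p
    omega
  have hsucc (j : ℕ) : (aCoeff (p + 2) (j + 1) : ℤ) =
      aCoeff (p + 1) j + 2 * aCoeff (p + 1) (j + 1) - aCoeff p (j + 1) := by
    have := aCoeff_add_two_succ p j
    omega
  simp only [h₀, hsucc, add_mul, sub_mul, mul_assoc, sum_add_distrib, sum_sub_distrib,
    add_right_comm m 1, add_assoc m]
  ring

theorem Ffun_eq_aSum (n m : ℕ) : Ffun n m = aSum bCat n m :=
  sum_congr rfl fun j _ => by rw [aExt_natCast_sub]

theorem stmt_13 (n m : ℕ) (hn : 2 ≤ n) :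
    Ffun n m = Ffun (n - 1) (m + 1) + 2 * Ffun (n - 1) m - Ffun (n - 2) m := by
  obtain ⟨p, rfl⟩ := Nat.exists_eq_add_of_le' hn
  simp only [Ffun_eq_aSum, Nat.add_sub_cancel, Nat.add_succ_sub_one]
  exact aSum_add_two bCat p m
end

section
/- For n ≥ 0 and m ≥ 0 define F(n,m) = Σ_{j=0}^{n} a_{n−j}^{(n)}·b_{m+j}. Then: (1) for n ≥ 1 and 0 ≤ k ≤ n−1, Σ_{j=0}^{k} a_{k−j}^{(n)}·b_j = a_k^{(n−1)}; (2) for n ≥ 2 and 0 ≤ m ≤ n−2, F(n,m) = 0; (3) for n ≥ 1, F(n, n−1) = 1; (4) for n ≥ 1, F(n,n) = −(2n−1). -/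
open Finset

/-- Signed ballot numbers: coefficient of x^j in α^{-r} where α = (1+√(1+4x))/2. -/
def cB (r : ℕ) (j : ℤ) : ℤ :=
  if j ≤ 0 then (if j = 0 then 1 else 0)
  else (-1) ^ j.toNat *
    (((r + 2 * j.toNat - 1).choose j.toNat : ℤ)
      - ((r + 2 * j.toNat - 1).choose (j.toNat - 1) : ℤ))

lemma cB_neg (r : ℕ) {j : ℤ} (h : j < 0) : cB r j = 0 := by
  simp [cB, h.le, h.ne]

lemma cB_zero (r : ℕ) : cB r 0 = 1 := by simp [cB]

lemma cB_pos (r : ℕ) (t : ℕ) :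
    cB r (t + 1 : ℕ) = (-1) ^ (t + 1) *
      (((r + 2 * (t+1) - 1).choose (t+1) : ℤ) - ((r + 2 * (t+1) - 1).choose t : ℤ)) := by
  have h : ¬ ((t + 1 : ℕ) : ℤ) ≤ 0 := by exact_mod_cast Nat.not_succ_le_zero t
  simp only [cB, if_neg h]
  norm_num

lemma cB_one (r : ℕ) : cB r 1 = -(r : ℤ) := by
  have := cB_pos r 0
  norm_num at this
  exact this

/-- The key recurrence: α^{-r} = α^{-(r+1)} + x·α^{-(r+2)}. -/
lemma cB_rec (r : ℕ) (j : ℤ) : cB r j = cB (r + 1) j + cB (r + 2) (j - 1) := by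
  rcases lt_trichotomy j 0 with h | h | h
  · rw [cB_neg r h, cB_neg (r+1) h, cB_neg (r+2) (by omega)]; ring
  · subst h
    rw [cB_zero, cB_zero, cB_neg (r+2) (by omega)]; ring
  · -- j ≥ 1
    obtain ⟨t, rfl⟩ : ∃ t : ℕ, j = (t + 1 : ℕ) := by
      refine ⟨(j - 1).toNat, by omega⟩
    rw [cB_pos r t, cB_pos (r+1) t]
    rcases Nat.eq_zero_or_pos t with rfl | ht
    · have h0 : ((0 + 1 : ℕ) : ℤ) - 1 = 0 := by norm_num
      rw [h0, cB_zero]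
      simp [Nat.choose_one_right]
      push_cast
      ring
    · obtain ⟨s, rfl⟩ : ∃ s : ℕ, t = s + 1 := ⟨t - 1, by omega⟩
      have : ((s + 1 + 1 : ℕ) : ℤ) - 1 = ((s + 1 : ℕ) : ℤ) := by push_cast; ring
      rw [this, cB_pos (r+2) s]
      -- all natural subtractions: r + 2(s+2) - 1 = r + 2s + 3, etc.
      have e1 : r + 2 * (s + 1 + 1) - 1 = r + 2*s + 3 := by omega
      have e2 : r + 1 + 2 * (s + 1 + 1) - 1 = r + 2*s + 4 := by omega
      have e3 : r + 2 + 2 * (s + 1) - 1 = r + 2*s + 3 := by omega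
      rw [e1, e2, e3]
      -- Pascal: C(r+2s+4, s+2) = C(r+2s+3, s+1) + C(r+2s+3, s+2)
      have p1 : (r + 2*s + 4).choose (s + 2) = (r + 2*s + 3).choose (s+1) + (r + 2*s + 3).choose (s+2) :=
        Nat.choose_succ_succ _ _
      have p2 : (r + 2*s + 4).choose (s + 1) = (r + 2*s + 3).choose s + (r + 2*s + 3).choose (s+1) :=
        Nat.choose_succ_succ _ _
      push_cast [p1, p2]
      ring

/-- Coefficients of the Lucas polynomial `L_m(x) = α^m + β^m`. -/
def Lf (m : ℕ) (k : ℤ) : ℤ :=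
  if 0 ≤ k ∧ 2 * k ≤ (m : ℤ) then
    (if k = 0 then (if m = 0 then 2 else 1)
     else ((m - k.toNat).choose k.toNat : ℤ) + ((m - k.toNat - 1).choose (k.toNat - 1) : ℤ))
  else 0

lemma Lf_out (m : ℕ) {k : ℤ} (h : ¬ (0 ≤ k ∧ 2 * k ≤ (m : ℤ))) : Lf m k = 0 := by
  simp [Lf, h]

lemma Lf_neg (m : ℕ) {k : ℤ} (h : k < 0) : Lf m k = 0 :=
  Lf_out m (by omega)

lemma Lf_big (m : ℕ) {k : ℤ} (h : (m : ℤ) < 2 * k) : Lf m k = 0 :=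
  Lf_out m (by omega)

lemma Lf_zero {m : ℕ} (h : m ≠ 0) : Lf m 0 = 1 := by
  simp [Lf, h]

lemma Lf_zero_zero : Lf 0 0 = 2 := by simp [Lf]

lemma Lf_pos (m : ℕ) (t : ℕ) (h : 2 * (t + 1) ≤ m) :
    Lf m (t + 1 : ℕ) = ((m - (t+1)).choose (t+1) : ℤ) + ((m - (t+1) - 1).choose t : ℤ) := by
  have h1 : (0 : ℤ) ≤ ((t + 1 : ℕ) : ℤ) ∧ 2 * ((t + 1 : ℕ) : ℤ) ≤ (m : ℤ) := by
    constructor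
    · positivity
    · push_cast; omega
  have h2 : ((t + 1 : ℕ) : ℤ) ≠ 0 := by positivity
  rw [Lf, if_pos h1, if_neg h2]
  norm_num

lemma Lf_rec (m : ℕ) (hm : 2 ≤ m) (k : ℤ) :
    Lf m k = Lf (m - 1) k + Lf (m - 2) (k - 1) := by
  rcases lt_trichotomy k 0 with h | h | h
  · rw [Lf_neg m h, Lf_neg (m-1) h, Lf_neg (m-2) (by omega)]; ring
  · subst h
    rw [Lf_zero (by omega), Lf_zero (by omega), Lf_neg (m-2) (by omega)]; ring
  · obtain ⟨t, rfl⟩ : ∃ t : ℕ, k = (t + 1 : ℕ) := ⟨(k-1).toNat, by omega⟩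
    have hc : ((t + 1 : ℕ) : ℤ) - 1 = (t : ℕ) := by push_cast; ring
    rcases Nat.lt_or_ge m (2 * (t + 1)) with hb | hb
    · -- all zero
      rw [Lf_big m (by push_cast; omega), Lf_big (m-1) (by push_cast; omega), hc]
      rcases Nat.eq_zero_or_pos t with rfl | ht
      · -- k = 1, m < 2 : impossible since m ≥ 2
        omega
      · rw [Lf_big (m-2) (by push_cast; omega)]; ring
    · -- 2(t+1) ≤ m
      rw [Lf_pos m t hb, hc]
      rcases Nat.lt_or_ge (m-1) (2*(t+1)) with hb1 | hb1
      · -- 2(t+1) = m, i.e. m = 2t+2 : LHS = 2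
        have hm' : m = 2*t + 2 := by omega
        subst hm'
        rw [Lf_big (2*t+2-1) (by push_cast; omega)]
        rcases Nat.eq_zero_or_pos t with rfl | ht
        · -- m = 2 : Lf 0 0 = 2
          norm_num [Lf_zero_zero]
        · obtain ⟨s, rfl⟩ : ∃ s : ℕ, t = s + 1 := ⟨t - 1, by omega⟩
          rw [show (2*(s+1)+2-2 : ℕ) = 2*(s+1) from by omega]
          rw [Lf_pos (2*(s+1)) s (by omega)]
          have e1 : 2*(s+1)+2 - (s+1+1) = s + 2 := by omega
          have e3 : 2*(s+1) - (s+1) = s + 1 := by omega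
          rw [e1, e3]
          norm_num [Nat.choose_self]
      · -- 2(t+1) ≤ m - 1
        rw [Lf_pos (m-1) t hb1]
        rcases Nat.eq_zero_or_pos t with rfl | ht
        · -- k = 1 : Lf (m-2) 0 = 1, identity C(m-1,1)+1 = C(m-2,1)+1+1
          rw [Nat.cast_zero, Lf_zero (show m - 2 ≠ 0 by omega)]
          have e2 : m - (0+1) - 1 = m - 2 := by omega
          have e1 : m - (0+1) = m - 1 := by omega
          have e4 : m - 1 - (0+1) - 1 = m - 3 := by omega
          have e3 : m - 1 - (0+1) = m - 2 := by omega
          rw [e2, e1]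
          simp [Nat.choose_one_right, Nat.choose_zero_right]
          omega
        · obtain ⟨s, rfl⟩ : ∃ s : ℕ, t = s + 1 := ⟨t - 1, by omega⟩
          rw [Lf_pos (m-2) s (by omega)]
          -- Pascal twice
          have e1 : m - (s+1+1) = m - s - 2 := by omega
          have e2 : m - (s+1+1) - 1 = m - s - 3 := by omega
          have e3 : m - 1 - (s+1+1) = m - s - 3 := by omega
          have e4 : m - 1 - (s+1+1) - 1 = m - s - 4 := by omega
          have e5 : m - 2 - (s+1) = m - s - 3 := by omega
          have e6 : m - 2 - (s+1) - 1 = m - s - 4 := by omega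
          rw [e2, e1, e4, e3, e6, e5]
          have p1 : (m - s - 2).choose (s+1+1) = (m - s - 3).choose (s+1) + (m-s-3).choose (s+1+1) := by
            rw [show m - s - 2 = (m - s - 3) + 1 from by omega]
            exact Nat.choose_succ_succ _ _
          have p2 : (m - s - 3).choose (s+1) = (m - s - 4).choose s + (m-s-4).choose (s+1) := by
            rw [show m - s - 3 = (m - s - 4) + 1 from by omega]
            exact Nat.choose_succ_succ _ _
          push_cast [p1, p2]
          ring

/-- Correction term: coefficient of x^k in `-β^{m-2}√(1+4x)/α²`. -/
def Ef (m : ℕ) (k : ℤ) : ℤ :=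
  (-1) ^ (m + 1) * (cB (m - 1) (k - (m : ℤ) + 2) + cB (m + 1) (k - (m : ℤ) + 1))

/-- Convolution of Lucas coefficients with signed Catalan numbers. -/
def Tf (m k : ℕ) : ℤ := ∑ j ∈ Finset.range (k + 1), Lf m ((k : ℤ) - j) * bCat j

lemma Ef_rec (n : ℕ) (k : ℤ) : Ef (n+4) k = Ef (n+3) k + Ef (n+2) (k-1) := by
  have r1 : cB (n+1) (k - n - 1) = cB (n+2) (k - n - 1) + cB (n+3) (k - n - 2) := by
    have h := cB_rec (n+1) (k - n - 1)
    rw [show k - (n:ℤ) - 1 - 1 = k - n - 2 from by ring] at h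
    exact h
  have r2 : cB (n+3) (k - n - 2) = cB (n+4) (k - n - 2) + cB (n+5) (k - n - 3) := by
    have h := cB_rec (n+3) (k - n - 2)
    rw [show k - (n:ℤ) - 2 - 1 = k - n - 3 from by ring] at h
    exact h
  unfold Ef
  rw [show (n+4) - 1 = n+3 from by omega, show (n+4) + 1 = n+5 from by omega,
      show (n+3) - 1 = n+2 from by omega, show (n+3) + 1 = n+4 from by omega,
      show (n+2) - 1 = n+1 from by omega, show (n+2) + 1 = n+3 from by omega]
  rw [show k - ((n+4 : ℕ) : ℤ) + 2 = k - n - 2 from by push_cast; ring,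
      show k - ((n+4 : ℕ) : ℤ) + 1 = k - n - 3 from by push_cast; ring,
      show k - ((n+3 : ℕ) : ℤ) + 2 = k - n - 1 from by push_cast; ring,
      show k - ((n+3 : ℕ) : ℤ) + 1 = k - n - 2 from by push_cast; ring,
      show k - 1 - ((n+2 : ℕ) : ℤ) + 2 = k - n - 1 from by push_cast; ring,
      show k - 1 - ((n+2 : ℕ) : ℤ) + 1 = k - n - 2 from by push_cast; ring]
  rw [r1, r2]
  ring

lemma Ef_vanish (m : ℕ) (k : ℤ) (h : k - m + 2 < 0) : Ef m k = 0 := by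
  unfold Ef
  rw [cB_neg _ h, cB_neg _ (by omega)]
  ring

lemma Tf_zero (m : ℕ) (hm : m ≠ 0) : Tf m 0 = 1 := by
  unfold Tf
  rw [Finset.sum_range_one]
  norm_num [Lf_zero hm]
  decide

lemma Tf_rec (m : ℕ) (hm : 2 ≤ m) (k : ℕ) :
    Tf m (k+1) = Tf (m-1) (k+1) + Tf (m-2) k := by
  unfold Tf
  have hcg : ∀ j ∈ Finset.range (k+1+1),
      Lf m (((k+1:ℕ) : ℤ) - j) * bCat j
        = Lf (m-1) (((k+1:ℕ):ℤ) - j) * bCat j + Lf (m-2) ((k:ℤ) - j) * bCat j := by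
    intro j _
    rw [Lf_rec m hm (((k+1:ℕ):ℤ) - j)]
    rw [show ((k+1:ℕ):ℤ) - j - 1 = (k:ℤ) - j from by push_cast; ring]
    ring
  rw [Finset.sum_congr rfl hcg, Finset.sum_add_distrib]
  congr 1
  rw [Finset.sum_range_succ]
  have hz : Lf (m-2) ((k:ℤ) - ((k+1 : ℕ):ℤ)) = 0 := Lf_neg _ (by push_cast; omega)
  rw [hz]
  ring

lemma Tf_row (m : ℕ) (hsm : ∀ i : ℤ, 2 ≤ i → Lf m i = 0) (k : ℕ) :
    Tf m (k+1) = Lf m 1 * bCat k + Lf m 0 * bCat (k+1) := by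
  unfold Tf
  have hsub : ({k, k+1} : Finset ℕ) ⊆ Finset.range (k+1+1) := by
    intro x hx
    simp only [Finset.mem_insert, Finset.mem_singleton] at hx
    simp only [Finset.mem_range]
    omega
  rw [← Finset.sum_subset hsub (by
    intro x hx hnx
    simp only [Finset.mem_range] at hx
    simp only [Finset.mem_insert, Finset.mem_singleton] at hnx
    have : (2:ℤ) ≤ ((k+1:ℕ):ℤ) - x := by push_cast; omega
    rw [hsm _ this, zero_mul])]
  rw [Finset.sum_pair (show k ≠ k+1 from by omega)]
  rw [show ((k+1:ℕ):ℤ) - (k:ℕ) = 1 from by push_cast; ring,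
      show ((k+1:ℕ):ℤ) - ((k+1:ℕ):ℤ) = 0 from by ring]

lemma cB_zero_row (k : ℕ) : cB 0 ((k:ℤ)+1) = 0 := by
  have h := cB_pos 0 k
  rw [show ((k+1:ℕ):ℤ) = (k:ℤ)+1 from by push_cast; ring] at h
  rw [h]
  rw [show 0 + 2*(k+1) - 1 = 2*k+1 from by omega]
  rw [show (2*k+1).choose (k+1) = (2*k+1).choose k from by
    rw [← Nat.choose_symm (show k+1 ≤ 2*k+1 from by omega)]
    congr 1
    omega]
  ring

lemma I4 (k : ℕ) : cB 1 ((k:ℤ)+1) = - cB 2 k := by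
  have h := cB_rec 0 ((k:ℤ)+1)
  rw [cB_zero_row k, show (k:ℤ)+1-1 = (k:ℤ) from by ring] at h
  linarith

lemma I3 (k : ℕ) : cB 2 ((k:ℤ)+1) + cB 2 k + cB 3 k = 0 := by
  have h := cB_rec 1 ((k:ℤ)+1)
  rw [show (k:ℤ)+1-1 = (k:ℤ) from by ring] at h
  have h4 := I4 k
  linarith

lemma bCat_eq (k : ℕ) : bCat k = cB 2 k := by
  rcases k with _ | t
  · rw [Nat.cast_zero, cB_zero]; decide
  · rw [cB_pos 2 t]
    unfold bCat
    rw [show 2 + 2*(t+1) - 1 = 2*t+3 from by omega,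
        show 2*(t+1)+2 = 2*t+4 from by omega,
        show (t+1)+1 = t+2 from by omega,
        show (t+1)+2 = t+3 from by omega]
    congr 1
    -- ⊢ ((2t+4).choose (t+2) / (t+3) : ℕ) = C(2t+3,t+1) - C(2t+3,t)
    have f1 : (2*t+4).choose (t+2) = (2*t+3).choose (t+1) + (2*t+3).choose (t+2) :=
      Nat.choose_succ_succ _ _
    have f2 : (2*t+3).choose (t+2) = (2*t+3).choose (t+1) := by
      rw [← Nat.choose_symm (show t+2 ≤ 2*t+3 from by omega)]
      congr 1
      omega
    have f3 : (2*t+3).choose (t+1) * (t+1) = (2*t+3).choose t * (t+3) := by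
      have := Nat.choose_succ_right_eq (2*t+3) t
      rw [show 2*t+3-t = t+3 from by omega] at this
      exact this
    set A := (2*t+3).choose (t+1) with hA
    set B := (2*t+3).choose t with hB
    have hBA : B ≤ A := by nlinarith
    have f3' : (A:ℤ) * ((t:ℤ)+1) = (B:ℤ) * ((t:ℤ)+3) := by exact_mod_cast f3
    have key : (2*t+4).choose (t+2) = (t+3) * (A - B) := by
      zify [hBA]
      push_cast [f1, f2]
      linear_combination -f3'
    rw [key, Nat.mul_div_cancel_left _ (show 0 < t+3 from by omega)]
    push_cast [hBA]
    ring

lemma Lf_two_one : Lf 2 1 = 2 := by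
  have := Lf_pos 2 0 (by omega)
  norm_num at this
  rw [this]

lemma Lf_three_one : Lf 3 1 = 3 := by
  have := Lf_pos 3 0 (by omega)
  norm_num at this
  rw [this]

theorem master (m : ℕ) : 2 ≤ m → ∀ k : ℕ, Tf m k = Lf (m-2) (k:ℤ) + Ef m (k:ℤ) := by
  induction m using Nat.strong_induction_on with
  | _ m ih =>
    rcases m with _|_|_|_|m
    · omega
    · omega
    · -- m = 2
      intro _ k
      show Tf 2 k = Lf 0 (k:ℤ) + Ef 2 (k:ℤ)
      rcases k with _ | k
      · rw [Tf_zero 2 (by omega), Nat.cast_zero, Lf_zero_zero]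
        unfold Ef
        norm_num [cB_zero, cB_neg 3 (show (-1:ℤ) < 0 from by norm_num)]
      · rw [Tf_row 2 (fun i hi => Lf_big 2 (by omega)) k, Lf_two_one,
            Lf_zero (show (2:ℕ) ≠ 0 from by omega), bCat_eq, bCat_eq]
        rw [Lf_big 0 (show ((0:ℕ):ℤ) < 2*((k+1:ℕ):ℤ) from by push_cast; omega)]
        unfold Ef
        rw [show ((k+1:ℕ):ℤ) - ((2:ℕ):ℤ) + 2 = (k:ℤ)+1 from by push_cast; ring,
            show ((k+1:ℕ):ℤ) - ((2:ℕ):ℤ) + 1 = (k:ℤ) from by push_cast; ring]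
        have h3 := I3 k
        have h4 := I4 k
        rw [show ((k+1:ℕ):ℤ) = (k:ℤ)+1 from by push_cast; ring]
        push_cast
        linarith
    · -- m = 3
      intro _ k
      show Tf 3 k = Lf 1 (k:ℤ) + Ef 3 (k:ℤ)
      rcases k with _ | k
      · rw [Tf_zero 3 (by omega), Nat.cast_zero, Lf_zero (show (1:ℕ) ≠ 0 from by omega)]
        unfold Ef
        rw [cB_neg _ (show (0:ℤ) - ((3:ℕ):ℤ) + 2 < 0 from by norm_num),
            cB_neg _ (show (0:ℤ) - ((3:ℕ):ℤ) + 1 < 0 from by norm_num)]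
        norm_num
      · rw [Tf_row 3 (fun i hi => Lf_big 3 (by omega)) k, Lf_three_one,
            Lf_zero (show (3:ℕ) ≠ 0 from by omega), bCat_eq, bCat_eq]
        rw [Lf_big 1 (show ((1:ℕ):ℤ) < 2*((k+1:ℕ):ℤ) from by push_cast; omega)]
        unfold Ef
        rw [show ((k+1:ℕ):ℤ) - ((3:ℕ):ℤ) + 2 = (k:ℤ) from by push_cast; ring,
            show ((k+1:ℕ):ℤ) - ((3:ℕ):ℤ) + 1 = (k:ℤ) - 1 from by push_cast; ring]
        rcases k with _ | s
        · have h1 := cB_one 2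
          have h4 := I4 0
          have h3 := I3 0
          rw [Nat.cast_zero] at *
          rw [cB_zero, cB_neg 4 (show (0:ℤ)-1 < 0 from by norm_num)]
          rw [show ((0+1:ℕ):ℤ) = (0:ℤ)+1 from by norm_num]
          push_cast at *
          linarith
        · have hr : cB 2 ((s:ℤ)+1) = cB 3 ((s:ℤ)+1) + cB 4 (s:ℤ) := by
            have h := cB_rec 2 ((s:ℤ)+1)
            rw [show (s:ℤ)+1-1 = (s:ℤ) from by ring] at h
            exact h
          have h3 := I3 (s+1)
          rw [show ((s+1:ℕ):ℤ) = (s:ℤ)+1 from by push_cast; ring] at *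
          rw [show ((s+1+1:ℕ):ℤ) = ((s:ℤ)+1)+1 from by push_cast; ring] at *
          rw [show (s:ℤ)+1-1 = (s:ℤ) from by ring]
          push_cast at *
          linarith
    · -- m + 4
      intro _ k
      have ih3 := ih (m+3) (by omega) (by omega)
      have ih2 := ih (m+2) (by omega) (by omega)
      show Tf (m+4) k = Lf (m+2) (k:ℤ) + Ef (m+4) (k:ℤ)
      rcases k with _ | k
      · rw [Tf_zero (m+4) (by omega), Nat.cast_zero,
            Lf_zero (show m+2 ≠ 0 from by omega),
            Ef_vanish (m+4) 0 (by push_cast; omega)]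
        norm_num
      · have hTr := Tf_rec (m+4) (by omega) k
        rw [show m+4-1 = m+3 from by omega, show m+4-2 = m+2 from by omega] at hTr
        rw [hTr, ih3 (k+1), ih2 k]
        rw [show m+3-2 = m+1 from by omega, show m+2-2 = m from by omega]
        have hL := Lf_rec (m+2) (by omega) (((k+1:ℕ)):ℤ)
        rw [show m+2-1 = m+1 from by omega, show m+2-2 = m from by omega,
            show ((k+1:ℕ):ℤ) - 1 = (k:ℤ) from by push_cast; ring] at hL
        have hE := Ef_rec m (((k+1:ℕ)):ℤ)
        rw [show ((k+1:ℕ):ℤ) - 1 = (k:ℤ) from by push_cast; ring] at hE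
        rw [hL, hE]
        ring

lemma aExt_eq_Lf (n : ℕ) (i : ℤ) : aExt n i = Lf (2*n+1) i := by
  by_cases h : 0 ≤ i ∧ i ≤ (n : ℤ)
  · have hg : 0 ≤ i ∧ 2 * i ≤ ((2*n+1 : ℕ) : ℤ) := by
      constructor
      · exact h.1
      · push_cast; omega
    rw [aExt, if_pos h, Lf, if_pos hg]
    by_cases hi : i = 0
    · subst hi
      rw [if_pos rfl, if_neg (show 2*n+1 ≠ 0 from by omega)]
      by_cases hn : n = 0
      · rw [if_pos hn]
      · rw [if_neg hn]
        simp only [Int.toNat_zero, Nat.mul_zero, Nat.sub_zero]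
        rw [show 2*n + 1 = 2*n+1 from rfl]
        rw [Nat.choose_self, Nat.choose_eq_zero_of_lt (by omega)]
        norm_num
    · rw [if_neg hi]
      have hn : n ≠ 0 := by
        rintro rfl
        simp at h
        omega
      rw [if_neg hn]
      set t := i.toNat with ht
      have ht1 : 1 ≤ t := by omega
      have htn : t ≤ n := by omega
      have e1 : 2*n - t + 1 = 2*n+1 - t := by omega
      have e2 : 2*n - 2*t + 1 = (2*n+1-t) - t := by omega
      have e3 : 2*n - 2*t + 1 = (2*n - t) - (t - 1) := by omega
      rw [e1]
      rw [show (2*n - 2*t + 1) = (2*n+1-t) - t from e2]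
      rw [Nat.choose_symm (show t ≤ 2*n+1-t from by omega)]
      rw [show 2*n+1-t-t = 2*n - t - (t-1) from by omega]
      rw [Nat.choose_symm (show t - 1 ≤ 2*n-t from by omega)]
      rw [show 2*n+1-t-1 = 2*n - t from by omega]
  · rw [aExt, if_neg h, Lf_out]
    intro hg
    apply h
    constructor
    · exact hg.1
    · push_cast at hg
      omega

lemma Ffun_eq (n m : ℕ) : Ffun n m = Tf (2*n+1) (n+m) := by
  unfold Ffun Tf
  rw [← Finset.sum_range_add_sum_Ico (fun j => Lf (2*n+1) (((n+m:ℕ):ℤ) - j) * bCat j)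
        (show m ≤ n+m+1 from by omega)]
  have hz : ∑ j ∈ Finset.range m, Lf (2*n+1) (((n+m:ℕ):ℤ) - j) * bCat j = 0 :=
    Finset.sum_eq_zero (fun j hj => by
      simp only [Finset.mem_range] at hj
      rw [Lf_big (2*n+1) (show ((2*n+1 : ℕ):ℤ) < 2 * (((n+m:ℕ):ℤ) - j) from by push_cast; omega),
          zero_mul])
  rw [hz, zero_add, Finset.sum_Ico_eq_sum_range, show n+m+1-m = n+1 from by omega]
  apply Finset.sum_congr rfl
  intro j hj
  rw [aExt_eq_Lf]
  rw [show ((n+m : ℕ):ℤ) - ((m+j:ℕ):ℤ) = (n:ℤ) - j from by push_cast; ring]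


theorem stmt_14 :
    (∀ n k : ℕ, 1 ≤ n → k ≤ n - 1 →
      ∑ j ∈ Finset.range (k + 1), aExt n ((k : ℤ) - j) * bCat j = aExt (n - 1) k) ∧
    (∀ n m : ℕ, 2 ≤ n → m ≤ n - 2 → Ffun n m = 0) ∧
    (∀ n : ℕ, 1 ≤ n → Ffun n (n - 1) = 1) ∧
    (∀ n : ℕ, 1 ≤ n → Ffun n n = -(2 * (n : ℤ) - 1)) := by
  refine ⟨?_, ?_, ?_, ?_⟩
  · intro n k hn hk
    have h1 : ∑ j ∈ Finset.range (k + 1), aExt n ((k : ℤ) - j) * bCat j = Tf (2*n+1) k := by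
      apply Finset.sum_congr rfl
      intro j hj
      rw [aExt_eq_Lf]
    rw [h1, master (2*n+1) (by omega) k,
        show 2*n+1-2 = 2*(n-1)+1 from by omega,
        Ef_vanish (2*n+1) k (by push_cast; omega),
        ← aExt_eq_Lf (n-1) (k:ℤ)]
    ring
  · intro n m hn hm
    rw [Ffun_eq, master (2*n+1) (by omega) (n+m),
        Lf_big (2*n+1-2) (show ((2*n+1-2 : ℕ):ℤ) < 2*((n+m:ℕ):ℤ) from by push_cast; omega),
        Ef_vanish (2*n+1) ((n+m:ℕ):ℤ) (by push_cast; omega)]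
    ring
  · intro n hn
    rw [Ffun_eq, show n + (n-1) = 2*n-1 from by omega, master (2*n+1) (by omega) (2*n-1),
        Lf_big (2*n+1-2) (show ((2*n+1-2 : ℕ):ℤ) < 2*((2*n-1:ℕ):ℤ) from by omega)]
    unfold Ef
    rw [show ((2*n-1:ℕ):ℤ) - ((2*n+1:ℕ):ℤ) + 2 = 0 from by omega,
        show ((2*n-1:ℕ):ℤ) - ((2*n+1:ℕ):ℤ) + 1 = -1 from by omega,
        cB_zero, cB_neg _ (show (-1:ℤ) < 0 from by norm_num)]
    rw [show 2*n+1+1 = 2*(n+1) from by ring, pow_mul]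
    norm_num
  · intro n hn
    rw [Ffun_eq, show n + n = 2*n from by omega, master (2*n+1) (by omega) (2*n),
        Lf_big (2*n+1-2) (show ((2*n+1-2 : ℕ):ℤ) < 2*((2*n:ℕ):ℤ) from by omega)]
    unfold Ef
    rw [show ((2*n:ℕ):ℤ) - ((2*n+1:ℕ):ℤ) + 2 = 1 from by omega,
        show ((2*n:ℕ):ℤ) - ((2*n+1:ℕ):ℤ) + 1 = 0 from by omega,
        cB_zero, cB_one]
    rw [show 2*n+1+1 = 2*(n+1) from by ring, pow_mul]
    push_cast
    ring
end

section
/- For n ≥ 1 and m ≥ 0 define F(n,m) = Σ_{j=0}^{n} a_{n−j}^{(n)}·b_{m+j}, and for n ≥ 1 and k ≥ 2 define H_k^{(n)} = Σ_{j=0}^{k} a_j^{(n)}·F(n−1, n+k−2−j) − Σ_{j=0}^{k−2} a_j^{(n−1)}·F(n, n+k−3−j). Then H_k^{(n)} = 0 for all n ≥ 1 and all k ≥ 2. -/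
open Finset

/-- `H_k^{(n)} = Σ_{j=0}^{k} a_j^{(n)}·F(n−1, n+k−2−j) − Σ_{j=0}^{k−2} a_j^{(n−1)}·F(n, n+k−3−j)`. -/
def Hfun (n k : ℕ) : ℤ :=
  (∑ j ∈ Finset.range (k + 1), aExt n j * Ffun (n - 1) (n + k - 2 - j)) -
  (∑ j ∈ Finset.range (k - 1), aExt (n - 1) j * Ffun n (n + k - 3 - j))

/-!
Put `A_n = Σ_k a_k^{(n)} X^k` and `B = Σ_s b_s X^s`. Then `F(n,m)` is the coefficient of
`X^{m+n}` in `A_n B`, and Pascal's rule gives `A_{n+2} = (1 + 2X) A_{n+1} - X² A_n`, so `F` obeys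
the matching three-term recurrence in `n`. Solving it from `F(0,m) = b_m` gives
`F(n,m) = (-1)^{m+n+1} (C(2m+1, m+n) - 2 C(2m+1, m+n+1) + C(2m+1, m+n+2))`,
which vanishes for `m + 2 ≤ n`. These vanishing values are exactly what is needed to complete
each of the two sums in `H_k^{(n)}` to the coefficient of `X^{2n+k-3}` in `A_n A_{n-1} B`.
-/

open PowerSeries

-- `C(N, r)` with an integer lower index, zero for `r < 0`: Pascal's rule then needs no side
-- conditions.
def binom (N : ℕ) (r : ℤ) : ℤ := if 0 ≤ r then (N.choose r.toNat : ℤ) else 0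

namespace binom

lemma of_neg {N : ℕ} {r : ℤ} (hr : r < 0) : binom N r = 0 := if_neg (not_le.2 hr)

@[simp] lemma natCast (N k : ℕ) : binom N k = N.choose k := by simp [binom]

lemma of_lt {N : ℕ} {r : ℤ} (hr : N < r) : binom N r = 0 := by
  lift r to ℕ using by omega
  rw [natCast, Nat.choose_eq_zero_of_lt (by omega), Nat.cast_zero]

lemma succ_succ (N : ℕ) (r : ℤ) : binom (N + 1) (r + 1) = binom N r + binom N (r + 1) := by
  rcases lt_or_ge r (-1) with hr | hr
  · rw [of_neg (by omega), of_neg (by omega), of_neg (by omega), add_zero]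
  obtain rfl | hr := hr.eq_or_lt
  · simp [binom]
  lift r to ℕ using by omega
  rw [← Nat.cast_succ, natCast, natCast, natCast]
  exact_mod_cast Nat.choose_succ_succ N r

lemma add_two (N : ℕ) (r : ℤ) :
    binom (N + 2) r = binom N r + 2 * binom N (r - 1) + binom N (r - 2) := by
  have h₁ := succ_succ (N + 1) (r - 1)
  have h₂ := succ_succ N (r - 1)
  have h₃ := succ_succ N (r - 2)
  simp only [sub_add_cancel, show r - 2 + 1 = r - 1 by ring] at h₁ h₂ h₃
  linear_combination h₁ + h₂ + h₃

lemma symm (N : ℕ) (r : ℤ) : binom N (N - r) = binom N r := by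
  rcases lt_or_ge r 0 with hr | hr
  · rw [of_neg hr, of_lt (by omega)]
  rcases lt_or_ge (N : ℤ) r with hN | hN
  · rw [of_neg (by omega), of_lt hN]
  lift r to ℕ using hr
  rw [show (N : ℤ) - r = ((N - r : ℕ) : ℤ) by omega, natCast, natCast,
    Nat.choose_symm (by omega)]

end binom

lemma aExt_of_neg {n : ℕ} {k : ℤ} (hk : k < 0) : aExt n k = 0 := by
  simp only [aExt]; split_ifs <;> first | rfl | omega

lemma aExt_of_lt {n : ℕ} {k : ℤ} (hk : n < k) : aExt n k = 0 := by
  simp only [aExt]; split_ifs <;> first | rfl | omega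

lemma aExt_eq_binom {n p : ℕ} {k : ℤ} (h : 2 * (n : ℤ) = p + k) :
    aExt n k = binom (p + 1) k + binom p (k - 1) := by
  rcases lt_or_ge k 0 with hk | hk
  · rw [aExt_of_neg hk, binom.of_neg hk, binom.of_neg (by omega), add_zero]
  rcases lt_or_ge (n : ℤ) k with hkn | hkn
  · rw [aExt_of_lt hkn, binom.of_lt (by push_cast; omega), binom.of_lt (by omega), add_zero]
  lift k to ℕ using hk
  rcases Nat.eq_zero_or_pos n with rfl | hn
  · obtain rfl : k = 0 := by omega
    simp [aExt, binom]
  have hp : p = 2 * n - k := by omega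
  simp only [aExt, if_pos (And.intro (Int.natCast_nonneg k) hkn), if_neg hn.ne',
    Int.toNat_natCast, binom.natCast]
  rw [Nat.choose_symm_of_eq_add (show 2 * n - k + 1 = (2 * n - 2 * k + 1) + k by omega), ← hp]
  rcases Nat.eq_zero_or_pos k with rfl | hk
  · rw [binom.of_neg (show ((0 : ℕ) : ℤ) - 1 < 0 by omega),
      Nat.choose_eq_zero_of_lt (show p < 2 * n - 2 * 0 + 1 by omega), Nat.cast_zero]
  rw [show (k : ℤ) - 1 = ((k - 1 : ℕ) : ℤ) by omega, binom.natCast,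
    Nat.choose_symm_of_eq_add (show p = (2 * n - 2 * k + 1) + (k - 1) by omega)]

lemma aExt_add_two (n : ℕ) (k : ℤ) :
    aExt (n + 2) k = aExt (n + 1) k + 2 * aExt (n + 1) (k - 1) - aExt n (k - 2) := by
  rcases lt_or_ge ((n : ℤ) + 2) k with hk | hk
  · rw [aExt_of_lt (by push_cast; omega), aExt_of_lt (by push_cast; omega),
      aExt_of_lt (by omega), aExt_of_lt (by omega)]
    ring
  obtain ⟨q, hq⟩ : ∃ q : ℕ, (q : ℤ) = 2 * n + 2 - k :=
    ⟨(2 * n + 2 - k).toNat, by omega⟩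
  rw [aExt_eq_binom (p := q + 2) (by push_cast; omega),
    aExt_eq_binom (p := q) (by push_cast; omega),
    aExt_eq_binom (p := q + 1) (by push_cast; omega), aExt_eq_binom (p := q) (by omega)]
  have E₁ := binom.add_two (q + 1) k
  have E₂ := binom.add_two q (k - 1)
  have P := binom.succ_succ q (k - 2)
  simp only [show q + 2 + 1 = q + 1 + 2 by ring, show k - 1 - 1 = k - 2 by ring,
    show k - 1 - 2 = k - 2 - 1 by ring, show k - 2 + 1 = k - 1 by ring] at *
  linear_combination E₁ - E₂ + 2 * P

def aSeries (n : ℕ) : PowerSeries ℤ := mk fun k ↦ aExt n k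

def bSeries : PowerSeries ℤ := mk bCat

lemma coeff_X_pow_mul_aSeries (n d k : ℕ) :
    coeff k (X ^ d * aSeries n) = aExt n ((k : ℤ) - d) := by
  rw [coeff_X_pow_mul', aSeries]
  split_ifs with h
  · rw [coeff_mk, Nat.cast_sub h]
  · rw [aExt_of_neg (by omega)]

lemma aSeries_add_two (n : ℕ) :
    aSeries (n + 2) = (1 + 2 * X) * aSeries (n + 1) - X ^ 2 * aSeries n := by
  ext k
  have h := coeff_X_pow_mul_aSeries (n + 1) 1 k
  rw [pow_one] at h
  rw [show (1 + 2 * X) * aSeries (n + 1)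
      = aSeries (n + 1) + X * aSeries (n + 1) + X * aSeries (n + 1) by ring,
    map_sub, map_add, map_add, h, coeff_X_pow_mul_aSeries, aSeries, aSeries, coeff_mk, coeff_mk,
    aExt_add_two]
  push_cast
  ring

lemma coeff_aSeries_mul (n M : ℕ) (φ : PowerSeries ℤ) :
    coeff M (aSeries n * φ) = ∑ j ∈ range (M + 1), aExt n j * coeff (M - j) φ := by
  rw [coeff_mul,
    Finset.Nat.sum_antidiagonal_eq_sum_range_succ (fun i j ↦ coeff i (aSeries n) * coeff j φ)]
  simp only [aSeries, coeff_mk]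

lemma Ffun_eq_coeff (n m : ℕ) : Ffun n m = coeff (m + n) (aSeries n * bSeries) := by
  rw [coeff_aSeries_mul, Finset.eventually_constant_sum (N := n + 1) (fun j hj ↦ by
    rw [aExt_of_lt (by omega), zero_mul]) (by omega), Ffun, ← Finset.sum_range_reflect]
  refine Finset.sum_congr rfl fun j hj ↦ ?_
  have hj : j ≤ n := Nat.lt_succ_iff.1 (mem_range.1 hj)
  rw [bSeries, coeff_mk, Nat.add_sub_cancel, Nat.cast_sub hj, sub_sub_cancel, Nat.add_sub_assoc hj]

lemma Ffun_add_two (n m : ℕ) :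
    Ffun (n + 2) m = Ffun (n + 1) (m + 1) + 2 * Ffun (n + 1) m - Ffun n m := by
  have h : aSeries (n + 2) * bSeries = aSeries (n + 1) * bSeries + X * (aSeries (n + 1) * bSeries)
      + X * (aSeries (n + 1) * bSeries) - X ^ 2 * (aSeries n * bSeries) := by
    rw [aSeries_add_two]; ring
  simp only [Ffun_eq_coeff, h, map_sub, map_add, show m + (n + 2) = m + n + 1 + 1 by ring,
    show m + 1 + (n + 1) = m + n + 1 + 1 by ring, show m + (n + 1) = m + n + 1 by ring,
    coeff_succ_X_mul, coeff_X_pow_mul', if_pos (show 2 ≤ m + n + 1 + 1 by omega),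
    show m + n + 1 + 1 - 2 = m + n by omega]
  ring

def Fclosed (n m : ℕ) : ℤ :=
  (-1) ^ (m + n + 1) *
    (binom (2 * m + 1) (m + n) - 2 * binom (2 * m + 1) (m + n + 1) + binom (2 * m + 1) (m + n + 2))

lemma Fclosed_add_two (n m : ℕ) :
    Fclosed (n + 2) m = Fclosed (n + 1) (m + 1) + 2 * Fclosed (n + 1) m - Fclosed n m := by
  have E (r : ℤ) := binom.add_two (2 * m + 1) r
  simp only [show 2 * m + 1 + 2 = 2 * (m + 1) + 1 by ring] at E
  have E₂ := E (m + n + 2)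
  have E₃ := E (m + n + 3)
  have E₄ := E (m + n + 4)
  simp only [Fclosed, pow_succ, Nat.cast_add, Nat.cast_one, Nat.cast_ofNat] at *
  ring_nf at *
  linear_combination (-1) ^ (m + n) * (E₂ - 2 * E₃ + E₄)

lemma catalan_succ_eq_choose_sub (m : ℕ) :
    (catalan (m + 1) : ℤ) = (2 * m + 1).choose (m + 1) - (2 * m + 1).choose (m + 2) := by
  have hcat : (m + 2) * catalan (m + 1) = (2 * m + 1 + 1).choose (m + 1) := by
    rw [succ_mul_catalan_eq_centralBinom, Nat.centralBinom,
      show 2 * (m + 1) = 2 * m + 1 + 1 by ring]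
  have hsymm : (2 * m + 1).choose m = (2 * m + 1).choose (m + 1) :=
    Nat.choose_symm_of_eq_add (by ring)
  have habs := Nat.choose_succ_right_eq (2 * m + 1) (m + 1)
  rw [Nat.choose_succ_succ', hsymm] at hcat
  rw [show 2 * m + 1 - (m + 1) = m by omega] at habs
  zify at hcat habs
  refine mul_left_cancel₀ (show (m : ℤ) + 2 ≠ 0 by positivity) ?_
  linear_combination hcat + habs

lemma binom_two_mul_add_one_symm (m : ℕ) : binom (2 * m + 1) m = binom (2 * m + 1) (m + 1) := by
  rw [← binom.symm]; congr 1; push_cast; ring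

lemma bCat_eq_Fclosed (m : ℕ) : bCat m = Fclosed 0 m := by
  rw [bCat, show 2 * m + 2 = 2 * (m + 1) by ring, ← Nat.centralBinom,
    ← catalan_eq_centralBinom_div, catalan_succ_eq_choose_sub, Fclosed]
  simp only [Nat.cast_zero, add_zero]
  rw [binom_two_mul_add_one_symm,
    show (m : ℤ) + 1 = (m + 1 : ℕ) by push_cast; ring,
    show (m : ℤ) + 2 = (m + 2 : ℕ) by push_cast; ring, binom.natCast, binom.natCast, pow_succ]
  ring

lemma Fclosed_one (m : ℕ) : Fclosed 1 m = Fclosed 0 (m + 1) + 3 * Fclosed 0 m := by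
  have E (r : ℤ) := binom.add_two (2 * m + 1) r
  simp only [show 2 * m + 1 + 2 = 2 * (m + 1) + 1 by ring] at E
  have E₁ := E (m + 1)
  have E₂ := E (m + 2)
  have E₃ := E (m + 3)
  have S₀ := binom.symm (2 * m + 1) (m + 1)
  have S₁ := binom.symm (2 * m + 1) (m + 2)
  simp only [Fclosed, pow_succ, Nat.cast_add, Nat.cast_one, Nat.cast_ofNat, Nat.cast_mul] at *
  ring_nf at *
  linear_combination (-1) ^ m * (-E₁ + 2 * E₂ - E₃ + 3 * S₀ - S₁)

lemma aExt_zero_zero : aExt 0 0 = 1 := by decide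

lemma Ffun_zero_left (m : ℕ) : Ffun 0 m = bCat m := by
  simp [Ffun, aExt_zero_zero]

lemma Ffun_one_left (m : ℕ) : Ffun 1 m = Ffun 0 (m + 1) + 3 * Ffun 0 m := by
  have h₁ : aExt 1 1 = 3 := by decide
  have h₀ : aExt 1 0 = 1 := by decide
  simp only [Ffun, sum_range_succ, sum_range_zero, Nat.cast_zero, Nat.cast_one, sub_zero, sub_self,
    h₁, h₀, aExt_zero_zero, zero_add, add_zero]
  ring

lemma Ffun_eq_Fclosed (n m : ℕ) : Ffun n m = Fclosed n m := by
  induction n using Nat.twoStepInduction generalizing m with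
  | zero => rw [Ffun_zero_left, bCat_eq_Fclosed]
  | one => rw [Ffun_one_left, Fclosed_one, Ffun_zero_left, Ffun_zero_left, bCat_eq_Fclosed,
      bCat_eq_Fclosed]
  | more n ih₀ ih₁ => rw [Ffun_add_two, Fclosed_add_two, ih₀, ih₁, ih₁]

lemma Ffun_eq_zero {n m : ℕ} (h : m + 2 ≤ n) : Ffun n m = 0 := by
  rw [Ffun_eq_Fclosed, Fclosed, binom.of_lt (by omega), binom.of_lt (by omega),
    binom.of_lt (by omega)]
  ring

lemma sum_aExt_mul_Ffun {p q M K : ℕ} (hpq : p + q ≤ M) (hK : M + 1 ≤ 2 * q + K) :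
    ∑ j ∈ range (K + 1), aExt p j * Ffun q (M - q - j) =
      coeff M (aSeries p * (aSeries q * bSeries)) := by
  have hterm (j : ℕ) :
      aExt p j * Ffun q (M - q - j) = aExt p j * coeff (M - j) (aSeries q * bSeries) := by
    rcases le_or_gt j p with hj | hj
    · rw [Ffun_eq_coeff, show M - q - j + q = M - j by omega]
    · rw [aExt_of_lt (by omega), zero_mul, zero_mul]
  have hvanish : ∀ j ≥ min K p + 1, aExt p j * Ffun q (M - q - j) = 0 := by
    intro j hj
    rcases le_or_gt j p with hjp | hjp
    · rw [Ffun_eq_zero (by omega), mul_zero]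
    · rw [aExt_of_lt (by omega), zero_mul]
  rw [coeff_aSeries_mul, ← Finset.sum_congr rfl fun j _ ↦ hterm j,
    Finset.eventually_constant_sum hvanish (n := K + 1) (by omega),
    Finset.eventually_constant_sum hvanish (n := M + 1) (by omega)]

theorem stmt_16 (n k : ℕ) (hn : 1 ≤ n) (hk : 2 ≤ k) : Hfun n k = 0 := by
  obtain ⟨n, rfl⟩ : ∃ n', n = n' + 1 := ⟨n - 1, by omega⟩
  obtain ⟨k, rfl⟩ : ∃ k', k = k' + 2 := ⟨k - 2, by omega⟩
  have h₁ := sum_aExt_mul_Ffun (p := n + 1) (q := n) (M := 2 * n + k + 1) (K := k + 2) (by omega)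
    (by omega)
  have h₂ := sum_aExt_mul_Ffun (p := n) (q := n + 1) (M := 2 * n + k + 1) (K := k) (by omega)
    (by omega)
  rw [mul_left_comm] at h₂
  rw [Hfun, show k + 2 - 1 = k + 1 by omega, Nat.add_sub_cancel]
  refine (congrArg₂ (· - ·) ?_ ?_).trans (sub_eq_zero.2 (h₁.trans h₂.symm))
  all_goals exact Finset.sum_congr rfl fun j _ ↦ by congr 2; omega
end

section
/- Let n ≥ 1 and set c_k^{(n)} = C(n+k,2k) + 2·C(n+k,2k+1) for 0 ≤ k ≤ n. Then: (1) for all 0 ≤ k ≤ n, (2k+1)·c_k^{(n)} = (2n+1)·C(n+k, n−k); (2) c_0^{(n)} = 2n+1 and c_n^{(n)} = 1; (3) if p = 2n+1 is prime, then p divides c_k^{(n)} for every 0 ≤ k ≤ n−1. -/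
open Finset

/-- The coefficient `c_k^{(n)} = C(n+k,2k) + 2·C(n+k,2k+1)` of `θ_n`. -/
def thetaCoeffN (n k : ℕ) : ℕ := (n + k).choose (2 * k) + 2 * (n + k).choose (2 * k + 1)

theorem stmt_17 (n : ℕ) (hn : 1 ≤ n) :
    (∀ k : ℕ, k ≤ n → (2 * k + 1) * thetaCoeffN n k = (2 * n + 1) * (n + k).choose (n - k)) ∧
    (thetaCoeffN n 0 = 2 * n + 1 ∧ thetaCoeffN n n = 1) ∧
    (Nat.Prime (2 * n + 1) → ∀ k : ℕ, k ≤ n - 1 → (2 * n + 1) ∣ thetaCoeffN n k) := by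
  have key : ∀ k : ℕ, k ≤ n → (2 * k + 1) * thetaCoeffN n k = (2 * n + 1) * (n + k).choose (n - k) := by
    intro k hk
    have h1 : (n + k).choose (2 * k + 1) * (2 * k + 1) = (n + k).choose (2 * k) * (n + k - 2 * k) :=
      Nat.choose_succ_right_eq (n + k) (2 * k)
    have h2 : n + k - 2 * k = n - k := by omega
    have h3 : (n + k).choose (n - k) = (n + k).choose (2 * k) := by
      rw [← h2]
      exact Nat.choose_symm (by omega)
    rw [h3]
    unfold thetaCoeffN
    rw [h2] at h1
    have h5 : 2 * k + 1 + 2 * (n - k) = 2 * n + 1 := by omega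
    nlinarith [h1, h5]
  refine ⟨key, ⟨?_, ?_⟩, ?_⟩
  · simp [thetaCoeffN, Nat.choose_one_right]; omega
  · have : (n + n).choose (2 * n + 1) = 0 := Nat.choose_eq_zero_of_lt (by omega)
    simp [thetaCoeffN, this, ← two_mul, Nat.choose_self]
  · intro hp k hk
    have hkn : k ≤ n := by omega
    have hd : (2 * n + 1) ∣ (2 * k + 1) * thetaCoeffN n k := by
      rw [key k hkn]; exact Dvd.intro _ rfl
    have hcop : Nat.Coprime (2 * n + 1) (2 * k + 1) := by
      rw [hp.coprime_iff_not_dvd]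
      intro h
      have := Nat.le_of_dvd (by omega) h
      omega
    exact hcop.dvd_of_dvd_mul_left hd
end
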